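/- arXiv:1804.06918 — 9 statements merged into one kernel-verified Lean document; each statement's English description precedes it below -/
import Mathlib

section
/- Let ψ:(0,∞)→(0,∞) be non-decreasing with ∫₀^r s/ψ(s) ds < ∞ for every r>0, and let Φ(r) := r²/(2∫₀^r s/ψ(s) ds). Let a∈(0,∞], β̂>0 and C≥1. If ψ satisfies U_a(β̂,C), then Φ satisfies U_a(min(β̂,2), C). -/
open MeasureTheory Set
open scoped ENNReal

/-!
Write `I t = ∫₀ᵗ s / ψ s ds` and `k = R / r`, so that `Φ R / Φ r = k² I r / I R`. As `I` is
increasing, this ratio is at most `k²`. Substituting `s = k x` in `I R` and using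
`ψ (k x) ≤ C k^β̂ ψ x` gives `I R ≥ k^(2-β̂) I r / C`, so the ratio is also at most `C k^β̂`.
Whichever of `β̂` and `2` is smaller yields the bound.
-/

lemma div_div_sq_div_le {r R Ir IR M : ℝ} (hr : 0 < r) (hIr : 0 < Ir) (hIR : 0 < IR)
    (h : (R / r) ^ 2 * Ir ≤ M * IR) :
    R ^ 2 / (2 * IR) / (r ^ 2 / (2 * Ir)) ≤ M := by
  have hratio : R ^ 2 / (2 * IR) / (r ^ 2 / (2 * Ir)) = (R / r) ^ 2 * Ir / IR := by
    field_simp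
  rwa [hratio, div_le_iff₀ hIR]

lemma mul_intervalIntegral_le_intervalIntegral_of_le_comp_mul {f : ℝ → ℝ} {c k r : ℝ}
    (hk : 0 < k) (hr : 0 ≤ r) (hf₀ : IntervalIntegrable f volume 0 r)
    (hf : IntervalIntegrable f volume 0 (k * r))
    (h : ∀ x ∈ Icc 0 r, c * f x ≤ k * f (k * x)) :
    c * ∫ x in (0 : ℝ)..r, f x ≤ ∫ x in (0 : ℝ)..k * r, f x := by
  have hcomp : IntervalIntegrable (fun x => k * f (k * x)) volume 0 r := by
    have := (hf.comp_mul_left (c := k)).const_mul k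
    rwa [zero_div, mul_div_cancel_left₀ r hk.ne'] at this
  calc c * ∫ x in (0 : ℝ)..r, f x = ∫ x in (0 : ℝ)..r, c * f x :=
        (intervalIntegral.integral_const_mul c f).symm
    _ ≤ ∫ x in (0 : ℝ)..r, k * f (k * x) :=
        intervalIntegral.integral_mono_on hr (hf₀.const_mul c) hcomp h
    _ = ∫ x in (0 : ℝ)..k * r, f x := by
        rw [intervalIntegral.integral_const_mul, intervalIntegral.integral_comp_mul_left f hk.ne',
          mul_zero, smul_eq_mul, mul_inv_cancel_left₀ hk.ne']

section

variable {ψ : ℝ → ℝ}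

lemma intervalIntegrable_id_div (hψ_int : ∀ r : ℝ, 0 < r → IntegrableOn (fun s => s / ψ s) (Ioo 0 r))
    {t : ℝ} (ht : 0 < t) : IntervalIntegrable (fun s => s / ψ s) volume 0 t :=
  (intervalIntegrable_iff_integrableOn_Ioo_of_le ht.le).mpr (hψ_int t ht)

lemma intervalIntegral_id_div_pos (hψ_pos : ∀ r : ℝ, 0 < r → 0 < ψ r)
    (hψ_int : ∀ r : ℝ, 0 < r → IntegrableOn (fun s => s / ψ s) (Ioo 0 r))
    {t : ℝ} (ht : 0 < t) : 0 < ∫ s in (0 : ℝ)..t, s / ψ s :=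
  intervalIntegral.intervalIntegral_pos_of_pos_on (intervalIntegrable_id_div hψ_int ht)
    (fun x hx => div_pos hx.1 (hψ_pos x hx.1)) ht

lemma intervalIntegral_id_div_mono (hψ_pos : ∀ r : ℝ, 0 < r → 0 < ψ r)
    (hψ_int : ∀ r : ℝ, 0 < r → IntegrableOn (fun s => s / ψ s) (Ioo 0 r))
    {r R : ℝ} (hr : 0 ≤ r) (hrR : r ≤ R) (hR : 0 < R) :
    ∫ s in (0 : ℝ)..r, s / ψ s ≤ ∫ s in (0 : ℝ)..R, s / ψ s :=
  intervalIntegral.integral_mono_interval le_rfl hr hrR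
    ((ae_restrict_iff' measurableSet_Ioc).mpr
      (Filter.Eventually.of_forall fun x hx => (div_pos hx.1 (hψ_pos x hx.1)).le))
    (intervalIntegrable_id_div hψ_int hR)

lemma mul_intervalIntegral_id_div_le_of_le_mul_rpow (hψ_pos : ∀ r : ℝ, 0 < r → 0 < ψ r)
    (hψ_int : ∀ r : ℝ, 0 < r → IntegrableOn (fun s => s / ψ s) (Ioo 0 r))
    {r k C β : ℝ} (hr : 0 < r) (hk : 1 ≤ k) (hC : 0 < C)
    (hψ : ∀ x ∈ Ioc 0 r, ψ (k * x) ≤ C * k ^ β * ψ x) :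
    k ^ 2 / (C * k ^ β) * ∫ s in (0 : ℝ)..r, s / ψ s ≤ ∫ s in (0 : ℝ)..k * r, s / ψ s := by
  have hk₀ : 0 < k := zero_lt_one.trans_le hk
  refine mul_intervalIntegral_le_intervalIntegral_of_le_comp_mul hk₀ hr.le
    (intervalIntegrable_id_div hψ_int hr) (intervalIntegrable_id_div hψ_int (by positivity)) ?_
  rintro x ⟨hx₀, hxr⟩
  rcases hx₀.eq_or_lt with rfl | hx
  · simp
  have hψx := hψ_pos x hx
  calc k ^ 2 / (C * k ^ β) * (x / ψ x) = k ^ 2 * x / (C * k ^ β * ψ x) := by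
        field_simp
    _ ≤ k ^ 2 * x / ψ (k * x) :=
        div_le_div_of_nonneg_left (by positivity) (hψ_pos _ (by positivity)) (hψ x ⟨hx, hxr⟩)
    _ = k * (k * x / ψ (k * x)) := by ring

end

theorem stmt_5_general (ψ Φ : ℝ → ℝ)
    (hψ_pos : ∀ r : ℝ, 0 < r → 0 < ψ r)
    (hψ_int : ∀ r : ℝ, 0 < r → IntegrableOn (fun s => s / ψ s) (Ioo 0 r))
    (hΦ : ∀ r : ℝ, 0 < r → Φ r = r ^ 2 / (2 * ∫ s in Ioo (0:ℝ) r, s / ψ s))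
    (a : ℝ≥0∞) (β' C : ℝ) (hC : 1 ≤ C)
    (hU : ∀ r R : ℝ, 0 < r → r ≤ R → ENNReal.ofReal R < a →
      ψ R / ψ r ≤ C * (R / r) ^ β') :
    ∀ r R : ℝ, 0 < r → r ≤ R → ENNReal.ofReal R < a →
      Φ R / Φ r ≤ C * (R / r) ^ (min β' 2) := by
  intro r R hr hrR hRa
  have hR : 0 < R := hr.trans_le hrR
  have hC₀ : 0 < C := zero_lt_one.trans_le hC
  set k := R / r
  have hk₁ : 1 ≤ k := (one_le_div hr).mpr hrR
  have hkr : k * r = R := div_mul_cancel₀ R hr.ne'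
  have hIoo : ∀ t : ℝ, 0 < t → ∫ s in Ioo (0:ℝ) t, s / ψ s = ∫ s in (0:ℝ)..t, s / ψ s := by
    intro t ht
    rw [intervalIntegral.integral_of_le ht.le, integral_Ioc_eq_integral_Ioo]
  have hIR := intervalIntegral_id_div_pos hψ_pos hψ_int hR
  have hsq : k ^ 2 * ∫ s in (0:ℝ)..r, s / ψ s ≤ C * k ^ (2:ℝ) * ∫ s in (0:ℝ)..R, s / ψ s := by
    rw [Real.rpow_two, mul_comm C, mul_assoc]
    gcongr
    exact (intervalIntegral_id_div_mono hψ_pos hψ_int hr.le hrR hR).trans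
      (le_mul_of_one_le_left hIR.le hC)
  have hscale : k ^ 2 * ∫ s in (0:ℝ)..r, s / ψ s ≤ C * k ^ β' * ∫ s in (0:ℝ)..R, s / ψ s := by
    have hψk : ∀ x ∈ Ioc 0 r, ψ (k * x) ≤ C * k ^ β' * ψ x := by
      rintro x ⟨hx, hxr⟩
      have hkx : k * x ≤ R := hkr ▸ mul_le_mul_of_nonneg_left hxr (by positivity)
      have h := hU x (k * x) hx (le_mul_of_one_le_left hx.le hk₁)
        ((ENNReal.ofReal_le_ofReal hkx).trans_lt hRa)
      rwa [mul_div_cancel_right₀ k hx.ne', div_le_iff₀ (hψ_pos x hx)] at h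
    have h := mul_intervalIntegral_id_div_le_of_le_mul_rpow hψ_pos hψ_int hr hk₁ hC₀ hψk
    rwa [hkr, div_mul_eq_mul_div, div_le_iff₀ (by positivity), mul_comm _ (C * _)] at h
  rw [hΦ R hR, hΦ r hr, hIoo R hR, hIoo r hr]
  refine div_div_sq_div_le hr (intervalIntegral_id_div_pos hψ_pos hψ_int hr) hIR ?_
  rcases le_total β' 2 with hβ | hβ
  · rwa [min_eq_left hβ]
  · rwa [min_eq_right hβ]

/-- Let `ψ : (0,∞) → (0,∞)` be non-decreasing with
`∫₀^r s/ψ(s) ds < ∞` for every `r > 0`, and `Φ(r) = r²/(2∫₀^r s/ψ(s) ds)`.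
Let `a ∈ (0,∞]`, `β̂ > 0`, `C ≥ 1`.  If `ψ` satisfies `U_a(β̂, C)`, then `Φ`
satisfies `U_a(min(β̂,2), C)`. -/
theorem stmt_5 (ψ Φ : ℝ → ℝ)
    (hψ_pos : ∀ r : ℝ, 0 < r → 0 < ψ r)
    (hψ_mono : ∀ r s : ℝ, 0 < r → r ≤ s → ψ r ≤ ψ s)
    (hψ_int : ∀ r : ℝ, 0 < r → IntegrableOn (fun s => s / ψ s) (Ioo 0 r))
    (hΦ : ∀ r : ℝ, 0 < r → Φ r = r ^ 2 / (2 * ∫ s in Ioo (0:ℝ) r, s / ψ s))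
    (a : ℝ≥0∞) (ha : 0 < a) (β' C : ℝ) (hβ' : 0 < β') (hC : 1 ≤ C)
    (hU : ∀ r R : ℝ, 0 < r → r ≤ R → ENNReal.ofReal R < a →
      ψ R / ψ r ≤ C * (R / r) ^ β') :
    ∀ r R : ℝ, 0 < r → r ≤ R → ENNReal.ofReal R < a →
      Φ R / Φ r ≤ C * (R / r) ^ (min β' 2) :=
  stmt_5_general ψ Φ hψ_pos hψ_int hΦ a β' C hC hU
end

section
/- Let ψ:(0,∞)→(0,∞) be non-decreasing with ∫₀^r s/ψ(s) ds < ∞ for every r>0, and let Φ(r) := r²/(2∫₀^r s/ψ(s) ds). Let a∈(0,∞], β>0 and c∈(0,1]. If ψ satisfies L_a(β,c), then necessarily β < 2, and Φ satisfies L_a(β,c). -/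
open MeasureTheory Set
open scoped ENNReal

/-!
Lower scaling of `ψ` at the right end point `r₀` gives `s / ψ s ≥ C s ^ (1 - β)` near `0`, and
integrability of `s ^ (1 - β)` at `0` forces `β < 2`. For the scaling of `Φ`, the substitution
`s = k t` writes `∫₀^{kr} s / ψ s` as `k² ∫₀^r t / ψ (k t)`, and `ψ (k t) ≥ c k ^ β ψ t` bounds
this by `k² / (c k ^ β) ∫₀^r t / ψ t`, which is the claimed inequality for `Φ (k r) / Φ r`.
-/

theorem neg_one_lt_of_integrableOn_Ioo_of_mul_rpow_le {f : ℝ → ℝ} {C p r : ℝ} (hr : 0 < r)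
    (hC : 0 < C) (hf : IntegrableOn f (Ioo 0 r)) (hle : ∀ s ∈ Ioo 0 r, C * s ^ p ≤ f s) :
    -1 < p := by
  have hCp : IntegrableOn (fun s : ℝ => C * s ^ p) (Ioo 0 r) := by
    refine hf.mono' (by fun_prop) ?_
    filter_upwards [ae_restrict_mem measurableSet_Ioo] with s hs
    rw [Real.norm_of_nonneg (by have := hs.1; positivity)]
    exact hle s hs
  rw [← intervalIntegral.integrableOn_Ioo_rpow_iff hr]
  simpa [IntegrableOn, hC.ne'] using hCp.const_mul C⁻¹

theorem lt_two_of_lowerScaling {ψ : ℝ → ℝ} {r₀ β c : ℝ} (hψ_pos : ∀ r, 0 < r → 0 < ψ r)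
    (hint : IntegrableOn (fun s => s / ψ s) (Ioo 0 r₀)) (hr₀ : 0 < r₀) (hc : 0 < c)
    (hL : ∀ s ∈ Ioo 0 r₀, c * (r₀ / s) ^ β ≤ ψ r₀ / ψ s) : β < 2 := by
  have hψr₀ := hψ_pos r₀ hr₀
  suffices -1 < 1 - β by linarith
  refine neg_one_lt_of_integrableOn_Ioo_of_mul_rpow_le hr₀ (by positivity : 0 < c * r₀ ^ β / ψ r₀)
    hint fun s hs => ?_
  have hψs := hψ_pos s hs.1
  have hs0 := hs.1.le
  have h := hL s hs
  rw [Real.div_rpow hr₀.le hs.1.le, le_div_iff₀ hψs] at h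
  rw [Real.rpow_sub hs.1, Real.rpow_one, le_div_iff₀ hψs]
  calc c * r₀ ^ β / ψ r₀ * (s / s ^ β) * ψ s = s * (c * (r₀ ^ β / s ^ β) * ψ s) / ψ r₀ := by
        field_simp
    _ ≤ s * ψ r₀ / ψ r₀ := by gcongr
    _ = s := by field_simp

theorem intervalIntegral_zero_mul_le_of_comp_mul_le {f : ℝ → ℝ} {k r M : ℝ} (hk : 0 < k)
    (hr : 0 ≤ r) (hf : IntervalIntegrable f volume 0 (k * r))
    (hfr : IntervalIntegrable f volume 0 r) (hle : ∀ t ∈ Ioo 0 r, f (k * t) ≤ M * f t) :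
    ∫ s in 0..k * r, f s ≤ k * M * ∫ s in 0..r, f s := by
  have hcomp : IntervalIntegrable (fun t => f (k * t)) volume 0 r := by
    simpa [hk.ne'] using hf.comp_mul_left (c := k)
  calc ∫ s in 0..k * r, f s = k * ∫ t in 0..r, f (k * t) := by
        rw [← smul_eq_mul k (∫ t in 0..r, f (k * t)), intervalIntegral.smul_integral_comp_mul_left,
          mul_zero]
    _ ≤ k * ∫ t in 0..r, M * f t := by
        gcongr
        exact intervalIntegral.integral_mono_on_of_le_Ioo hr hcomp (hfr.const_mul M) hle
    _ = k * M * ∫ s in 0..r, f s := by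
        rw [intervalIntegral.integral_const_mul, mul_assoc]

theorem setIntegral_Ioo_div_pos {ψ : ℝ → ℝ} (hψ_pos : ∀ r, 0 < r → 0 < ψ r) {r : ℝ}
    (hint : IntegrableOn (fun s => s / ψ s) (Ioo 0 r)) (hr : 0 < r) :
    0 < ∫ s in Ioo 0 r, s / ψ s := by
  rw [← integral_Ioc_eq_integral_Ioo, ← intervalIntegral.integral_of_le hr.le]
  exact intervalIntegral.intervalIntegral_pos_of_pos_on
    ((intervalIntegrable_iff_integrableOn_Ioo_of_le hr.le).2 hint)
    (fun s hs => div_pos hs.1 (hψ_pos s hs.1)) hr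

theorem setIntegral_Ioo_div_mul_le {ψ : ℝ → ℝ} (hψ_pos : ∀ r, 0 < r → 0 < ψ r)
    (hψ_int : ∀ r, 0 < r → IntegrableOn (fun s => s / ψ s) (Ioo 0 r)) {k r m : ℝ}
    (hk : 0 < k) (hr : 0 < r) (hm : 0 < m) (hscale : ∀ t ∈ Ioo 0 r, m * ψ t ≤ ψ (k * t)) :
    ∫ s in Ioo 0 (k * r), s / ψ s ≤ k ^ 2 / m * ∫ s in Ioo 0 r, s / ψ s := by
  have hkr : 0 < k * r := mul_pos hk hr
  have hIoo : ∀ x, 0 < x → ∫ s in Ioo 0 x, s / ψ s = ∫ s in 0..x, s / ψ s := fun x hx => by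
    rw [intervalIntegral.integral_of_le hx.le, integral_Ioc_eq_integral_Ioo]
  have hii : ∀ x, 0 < x → IntervalIntegrable (fun s => s / ψ s) volume 0 x := fun x hx =>
    (intervalIntegrable_iff_integrableOn_Ioo_of_le hx.le).2 (hψ_int x hx)
  rw [hIoo _ hkr, hIoo r hr]
  calc ∫ s in 0..k * r, s / ψ s ≤ k * (k / m) * ∫ s in 0..r, s / ψ s := by
        refine intervalIntegral_zero_mul_le_of_comp_mul_le hk hr.le (hii _ hkr) (hii r hr)
          fun t ht => ?_
        have hψt := hψ_pos t ht.1
        calc k * t / ψ (k * t) ≤ k * t / (m * ψ t) := by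
              gcongr
              · exact (mul_pos hk ht.1).le
              · exact hscale t ht
          _ = k / m * (t / ψ t) := by field_simp
    _ = k ^ 2 / m * ∫ s in 0..r, s / ψ s := by ring

theorem stmt_6_general (ψ Φ : ℝ → ℝ)
    (hψ_pos : ∀ r : ℝ, 0 < r → 0 < ψ r)
    (hψ_int : ∀ r : ℝ, 0 < r → IntegrableOn (fun s => s / ψ s) (Ioo 0 r))
    (hΦ : ∀ r : ℝ, 0 < r → Φ r = r ^ 2 / (2 * ∫ s in Ioo (0:ℝ) r, s / ψ s))
    (a : ℝ≥0∞) (ha : 0 < a) (β c : ℝ) (hc : 0 < c)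
    (hL : ∀ r R : ℝ, 0 < r → r ≤ R → ENNReal.ofReal R < a →
      c * (R / r) ^ β ≤ ψ R / ψ r) :
    β < 2 ∧
      ∀ r R : ℝ, 0 < r → r ≤ R → ENNReal.ofReal R < a →
        c * (R / r) ^ β ≤ Φ R / Φ r := by
  obtain ⟨r₀, -, hr₀, hr₀a⟩ := ENNReal.lt_iff_exists_real_btwn.1 ha
  rw [ENNReal.ofReal_pos] at hr₀
  refine ⟨lt_two_of_lowerScaling hψ_pos (hψ_int r₀ hr₀) hr₀ hc
    fun s hs => hL s r₀ hs.1 hs.2.le hr₀a, fun r R hr hrR hRa => ?_⟩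
  obtain ⟨k, hk, rfl⟩ : ∃ k, 1 ≤ k ∧ R = k * r :=
    ⟨R / r, (one_le_div hr).2 hrR, (div_mul_cancel₀ R hr.ne').symm⟩
  have hk0 : 0 < k := one_pos.trans_le hk
  have hscale : ∀ t ∈ Ioo 0 r, c * k ^ β * ψ t ≤ ψ (k * t) := fun t ht => by
    have hkt : k * t ≤ k * r := by gcongr; exact ht.2.le
    have h := hL t (k * t) ht.1 (le_mul_of_one_le_left ht.1.le hk)
      ((ENNReal.ofReal_le_ofReal hkt).trans_lt hRa)
    rwa [mul_div_cancel_right₀ _ ht.1.ne', le_div_iff₀ (hψ_pos t ht.1)] at h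
  have hI := setIntegral_Ioo_div_mul_le hψ_pos hψ_int hk0 hr (by positivity) hscale
  have hIkr := setIntegral_Ioo_div_pos hψ_pos (hψ_int _ (mul_pos hk0 hr)) (mul_pos hk0 hr)
  rw [hΦ _ (mul_pos hk0 hr), hΦ r hr, mul_div_cancel_right₀ _ hr.ne']
  set A := ∫ s in Ioo 0 r, s / ψ s
  set B := ∫ s in Ioo 0 (k * r), s / ψ s
  rw [show (k * r) ^ 2 / (2 * B) / (r ^ 2 / (2 * A)) = k ^ 2 * A / B by field_simp,
    le_div_iff₀ hIkr]
  calc c * k ^ β * B ≤ c * k ^ β * (k ^ 2 / (c * k ^ β) * A) := by gcongr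
    _ = k ^ 2 * A := by field_simp

/-- Let `ψ : (0,∞) → (0,∞)` be non-decreasing with
`∫₀^r s/ψ(s) ds < ∞` for every `r > 0`, and `Φ(r) = r²/(2∫₀^r s/ψ(s) ds)`.
Let `a ∈ (0,∞]`, `β > 0`, `c ∈ (0,1]`.  If `ψ` satisfies `L_a(β, c)`, then
necessarily `β < 2`, and `Φ` satisfies `L_a(β, c)`. -/
theorem stmt_6 (ψ Φ : ℝ → ℝ)
    (hψ_pos : ∀ r : ℝ, 0 < r → 0 < ψ r)
    (hψ_mono : ∀ r s : ℝ, 0 < r → r ≤ s → ψ r ≤ ψ s)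
    (hψ_int : ∀ r : ℝ, 0 < r → IntegrableOn (fun s => s / ψ s) (Ioo 0 r))
    (hΦ : ∀ r : ℝ, 0 < r → Φ r = r ^ 2 / (2 * ∫ s in Ioo (0:ℝ) r, s / ψ s))
    (a : ℝ≥0∞) (ha : 0 < a) (β c : ℝ) (hβ : 0 < β) (hc : 0 < c) (hc1 : c ≤ 1)
    (hL : ∀ r R : ℝ, 0 < r → r ≤ R → ENNReal.ofReal R < a →
      c * (R / r) ^ β ≤ ψ R / ψ r) :
    β < 2 ∧
      ∀ r R : ℝ, 0 < r → r ≤ R → ENNReal.ofReal R < a →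
        c * (R / r) ^ β ≤ Φ R / Φ r :=
  stmt_6_general ψ Φ hψ_pos hψ_int hΦ a ha β c hc hL
end

section
/- Let ψ:(0,∞)→(0,∞) be non-decreasing with ∫₀^r s/ψ(s) ds < ∞ for every r>0, and let Φ(r) := r²/(2∫₀^r s/ψ(s) ds). Let a∈(0,∞). Then: (1) there exists c∈(0,1] with c·ψ(r) ≤ Φ(r) for all 0<r<a if and only if there exist β∈(0,2) and C≥1 such that ψ satisfies U_a(β,C); likewise, there exists c∈(0,1] with c·ψ(r) ≤ Φ(r) for all r>0 if and only if there exist β∈(0,2) and C≥1 such that ψ satisfies the global condition U(β,C); (2) there exists c∈(0,1] with c·ψ(r) ≤ Φ(r) for all r≥a if and only if there exist β∈(0,2) and C≥1 such that ψ satisfies U^a(β,C). -/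
/-!
Write `I(r) = ∫₀^r s/ψ(s) ds` (`integralDiv ψ r`), so that `c ψ(r) ≤ Φ(r)` reads
`2c ψ(r) I(r) ≤ r²`, while the monotonicity of `ψ` always gives `r² ≤ 2 ψ(r) I(r)`.

If `2c ψ I ≤ t²` on `[s, 2s]`, then `t/ψ(t) ≥ c I(s)/s` there, so `I(2s) ≥ (1 + c) I(s)`;
iterating, `I` grows at least like the power `log₂(1 + c)`, and comparing the two bounds above at
`r` and `R` gives `U(2 - log₂(1 + c), (1 + c)/c)`.

Conversely, `U(β, C)` below `r` bounds `s/ψ(s)` by `C r^β s^(1-β)/ψ(r)`, which is integrable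
at `0` because `β < 2`; integrating gives `I(r) ≤ C r²/((2 - β) ψ(r))`. On `[a, ∞)` the part
`I(a)` is absorbed because `U^a(β, C)` makes `ψ` grow at most quadratically.
-/

open MeasureTheory Set Real

lemma integral_Ioo_zero_rpow {p r : ℝ} (hp : -1 < p) (hr : 0 ≤ r) :
    ∫ s in Ioo (0 : ℝ) r, s ^ p = r ^ (p + 1) / (p + 1) := by
  rw [← integral_Ioc_eq_integral_Ioo, ← intervalIntegral.integral_of_le hr,
    integral_rpow (Or.inl hp), zero_rpow (by linarith), sub_zero]

lemma integrableOn_Ioo_zero_rpow {p : ℝ} (hp : -1 < p) (r : ℝ) :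
    IntegrableOn (fun s : ℝ => s ^ p) (Ioo 0 r) :=
  (intervalIntegral.intervalIntegrable_rpow' hp (a := 0) (b := r)).1.mono_set
    Ioo_subset_Ioc_self

section Doubling

variable {f : ℝ → ℝ} {q r R : ℝ}

lemma pow_mul_le_of_le_two_mul (hq : 0 ≤ q) (hr : 0 < r)
    (hf_double : ∀ s, r ≤ s → 2 * s ≤ R → q * f s ≤ f (2 * s)) :
    ∀ n : ℕ, r * 2 ^ n ≤ R → q ^ n * f r ≤ f (r * 2 ^ n) := by
  intro n
  induction n with
  | zero => simp
  | succ n ih =>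
    intro hn
    have hle : r ≤ r * 2 ^ n := le_mul_of_one_le_right hr.le (one_le_pow₀ one_le_two)
    have hdouble : 2 * (r * 2 ^ n) = r * 2 ^ (n + 1) := by ring
    calc q ^ (n + 1) * f r = q * (q ^ n * f r) := by ring
      _ ≤ q * f (r * 2 ^ n) := by gcongr; exact ih (by linarith)
      _ ≤ f (r * 2 ^ (n + 1)) := hdouble ▸ hf_double _ hle (hdouble ▸ hn)

lemma rpow_logb_mul_le_of_le_two_mul (hq : 1 ≤ q) (hr : 0 < r) (hrR : r ≤ R)
    (hf_nonneg : 0 ≤ f r) (hf_mono : MonotoneOn f (Icc r R))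
    (hf_double : ∀ s, r ≤ s → 2 * s ≤ R → q * f s ≤ f (2 * s)) :
    (R / r) ^ logb 2 q * f r ≤ q * f R := by
  obtain ⟨n, hn, hn'⟩ := exists_nat_pow_near ((one_le_div hr).2 hrR) one_lt_two
  have hrn : r * 2 ^ n ≤ R := by rwa [le_div_iff₀' hr] at hn
  have hpow : (R / r) ^ logb 2 q ≤ q ^ (n + 1) := calc
    (R / r) ^ logb 2 q ≤ ((2 : ℝ) ^ (n + 1)) ^ logb 2 q :=
      rpow_le_rpow (div_pos (hr.trans_le hrR) hr).le hn'.le (logb_nonneg one_lt_two hq)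
    _ = (2 ^ logb 2 q) ^ (n + 1) := by
      rw [← rpow_natCast_mul zero_le_two, mul_comm, rpow_mul_natCast zero_le_two]
    _ = q ^ (n + 1) := by rw [rpow_logb two_pos (by norm_num) (by linarith)]
  have hfn : f (r * 2 ^ n) ≤ f R :=
    hf_mono ⟨le_mul_of_one_le_right hr.le (one_le_pow₀ one_le_two), hrn⟩
      ⟨hrR, le_rfl⟩ hrn
  calc (R / r) ^ logb 2 q * f r ≤ q ^ (n + 1) * f r := by gcongr
    _ = q * (q ^ n * f r) := by ring
    _ ≤ q * f R := mul_le_mul_of_nonneg_left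
      ((pow_mul_le_of_le_two_mul (by linarith) hr hf_double n hrn).trans hfn) (by linarith)

end Doubling

noncomputable def integralDiv (ψ : ℝ → ℝ) (r : ℝ) : ℝ := ∫ s in Ioo (0 : ℝ) r, s / ψ s

section IntegralDiv

variable {ψ : ℝ → ℝ} (hψ_pos : ∀ r : ℝ, 0 < r → 0 < ψ r)
    (hψ_mono : ∀ r s : ℝ, 0 < r → r ≤ s → ψ r ≤ ψ s)
    (hψ_int : ∀ r : ℝ, 0 < r → IntegrableOn (fun s => s / ψ s) (Ioo 0 r))

include hψ_pos hψ_mono hψ_int in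
lemma sq_le_two_mul_mul_integralDiv {r : ℝ} (hr : 0 < r) :
    r ^ 2 ≤ 2 * (ψ r * integralDiv ψ r) := by
  have hψr := hψ_pos r hr
  have hle : ∫ s in Ioo (0 : ℝ) r, s / ψ r ≤ integralDiv ψ r :=
    setIntegral_mono_on ((continuous_id.div_const _).integrableOn_Icc.mono_set Ioo_subset_Icc_self)
      (hψ_int r hr) measurableSet_Ioo
      fun s hs => div_le_div_of_nonneg_left hs.1.le (hψ_pos s hs.1) (hψ_mono s r hs.1 hs.2.le)
  have hval : ∫ s in Ioo (0 : ℝ) r, s / ψ r = r ^ 2 / 2 / ψ r := by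
    have hid := integral_Ioo_zero_rpow (p := 1) (by norm_num) hr.le
    norm_num at hid
    rw [integral_div, hid]
  rw [hval, div_le_iff₀ hψr] at hle
  linarith

include hψ_pos in
lemma integralDiv_nonneg (r : ℝ) : 0 ≤ integralDiv ψ r :=
  setIntegral_nonneg measurableSet_Ioo fun s hs => div_nonneg hs.1.le (hψ_pos s hs.1).le

include hψ_pos hψ_mono hψ_int in
lemma integralDiv_pos {r : ℝ} (hr : 0 < r) : 0 < integralDiv ψ r := by
  have h := sq_le_two_mul_mul_integralDiv hψ_pos hψ_mono hψ_int hr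
  exact pos_of_mul_pos_right (by nlinarith [sq_pos_of_pos hr]) (hψ_pos r hr).le

include hψ_int in
lemma integralDiv_eq_add {r R : ℝ} (hr : 0 < r) (hrR : r ≤ R) :
    integralDiv ψ R = integralDiv ψ r + ∫ s in Ioo r R, s / ψ s := by
  have hint := hψ_int R (hr.trans_le hrR)
  rw [integralDiv, ← Ioo_union_Ico_eq_Ioo hr hrR, setIntegral_union
    (disjoint_left.2 fun _ hs ht => (not_le.2 hs.2) ht.1) measurableSet_Ico
    (hint.mono_set (Ioo_subset_Ioo_right hrR))
    (hint.mono_set fun _ hs => ⟨hr.trans_le hs.1, hs.2⟩), integral_Ico_eq_integral_Ioo]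
  rfl

include hψ_pos hψ_int in
lemma monotoneOn_integralDiv : MonotoneOn (integralDiv ψ) (Ioi 0) := by
  intro r hr R _ hrR
  rw [integralDiv_eq_add hψ_int hr hrR, le_add_iff_nonneg_right]
  exact setIntegral_nonneg measurableSet_Ioo fun s hs =>
    div_nonneg (hr.out.trans hs.1).le (hψ_pos s (hr.out.trans hs.1)).le

include hψ_pos hψ_int in
lemma one_add_mul_integralDiv_le_two_mul {c s : ℝ} (hc : 0 ≤ c) (hs : 0 < s)
    (h : ∀ t ∈ Icc s (2 * s), 2 * c * (ψ t * integralDiv ψ t) ≤ t ^ 2) :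
    (1 + c) * integralDiv ψ s ≤ integralDiv ψ (2 * s) := by
  -- on `(s, 2s)` the integrand is at least `2c I(t)/t ≥ c I(s)/s`
  have hpt : ∀ t ∈ Ioo s (2 * s), c * integralDiv ψ s / s ≤ t / ψ t := by
    rintro t ⟨hst, hts⟩
    have ht : 0 < t := hs.trans hst
    have hψt := hψ_pos t ht
    have hIst := monotoneOn_integralDiv hψ_pos hψ_int hs ht hst.le
    rw [div_le_div_iff₀ hs hψt]
    nlinarith [h t ⟨hst.le, hts.le⟩, mul_le_mul_of_nonneg_left hIst (mul_nonneg hc hψt.le)]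
  have hconst : ∫ _ in Ioo s (2 * s), c * integralDiv ψ s / s = c * integralDiv ψ s := by
    rw [setIntegral_const, volume_real_Ioo_of_le (by linarith), smul_eq_mul]
    field_simp
    ring
  have hmono : ∫ _ in Ioo s (2 * s), c * integralDiv ψ s / s ≤ ∫ t in Ioo s (2 * s), t / ψ t :=
    setIntegral_mono_on (integrableOn_const measure_Ioo_lt_top.ne)
      ((hψ_int _ (by linarith)).mono_set (Ioo_subset_Ioo_left hs.le)) measurableSet_Ioo hpt
  rw [integralDiv_eq_add hψ_int hs (R := 2 * s) (by linarith)]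
  linarith

include hψ_pos hψ_mono hψ_int in
lemma div_le_rpow_of_two_mul_le {S : Set ℝ} (hS : S.OrdConnected) (hS_pos : S ⊆ Ioi 0)
    {c : ℝ} (hc : 0 < c) (h : ∀ t ∈ S, 2 * c * (ψ t * integralDiv ψ t) ≤ t ^ 2)
    {r R : ℝ} (hr : r ∈ S) (hR : R ∈ S) (hrR : r ≤ R) :
    ψ R / ψ r ≤ (1 + c) / c * (R / r) ^ (2 - logb 2 (1 + c)) := by
  have hr0 : 0 < r := hS_pos hr
  have hR0 : 0 < R := hS_pos hR
  have hψr := hψ_pos r hr0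
  have hIr := integralDiv_pos hψ_pos hψ_mono hψ_int hr0
  have hgrowth : (R / r) ^ logb 2 (1 + c) * integralDiv ψ r ≤ (1 + c) * integralDiv ψ R :=
    rpow_logb_mul_le_of_le_two_mul (by linarith) hr0 hrR hIr.le
      ((monotoneOn_integralDiv hψ_pos hψ_int).mono fun _ ht => hr0.trans_le ht.1)
      fun s hrs hsR => one_add_mul_integralDiv_le_two_mul hψ_pos hψ_int hc.le
        (hr0.trans_le hrs) fun t ht => h t (hS.out hr hR ⟨hrs.trans ht.1, ht.2.trans hsR⟩)
  have hkey : c * ψ R * ((R / r) ^ logb 2 (1 + c) * integralDiv ψ r)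
      ≤ (1 + c) * (R / r) ^ 2 * (ψ r * integralDiv ψ r) := calc
    _ ≤ c * ψ R * ((1 + c) * integralDiv ψ R) := by
      gcongr
      exact mul_nonneg hc.le (hψ_pos R hR0).le
    _ = (1 + c) / 2 * (2 * c * (ψ R * integralDiv ψ R)) := by ring
    _ ≤ (1 + c) / 2 * R ^ 2 := by gcongr; exact h R hR
    _ = (1 + c) / 2 * (R / r) ^ 2 * r ^ 2 := by field_simp
    _ ≤ (1 + c) / 2 * (R / r) ^ 2 * (2 * (ψ r * integralDiv ψ r)) := by
      gcongr; exact sq_le_two_mul_mul_integralDiv hψ_pos hψ_mono hψ_int hr0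
    _ = (1 + c) * (R / r) ^ 2 * (ψ r * integralDiv ψ r) := by ring
  rw [rpow_sub (by positivity), rpow_two, div_le_iff₀ hψr,
    show (1 + c) / c * ((R / r) ^ 2 / (R / r) ^ logb 2 (1 + c)) * ψ r
      = (1 + c) * (R / r) ^ 2 * (ψ r * integralDiv ψ r)
        / (c * ((R / r) ^ logb 2 (1 + c) * integralDiv ψ r)) by field_simp,
    le_div_iff₀ (by positivity)]
  linarith

include hψ_pos hψ_int in
lemma integral_Ioo_div_le_of_scaling {a r β C : ℝ} (ha : 0 ≤ a) (hr : 0 < r) (hβ : β < 2)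
    (hC : 0 ≤ C) (hscal : ∀ s ∈ Ioo a r, ψ r / ψ s ≤ C * (r / s) ^ β) :
    ∫ s in Ioo a r, s / ψ s ≤ C / (2 - β) * (r ^ 2 / ψ r) := by
  have hψr := hψ_pos r hr
  have hk0 : 0 ≤ C * r ^ β / ψ r := by positivity
  set k := C * r ^ β / ψ r with hk
  have hsub : Ioo a r ⊆ Ioo 0 r := Ioo_subset_Ioo_left ha
  have hint : IntegrableOn (fun s : ℝ => k * s ^ (1 - β)) (Ioo 0 r) :=
    (integrableOn_Ioo_zero_rpow (by linarith) r).const_mul k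
  have hpt : ∀ s ∈ Ioo a r, s / ψ s ≤ k * s ^ (1 - β) := by
    intro s hs
    have hs0 : 0 < s := ha.trans_lt hs.1
    calc s / ψ s = s / ψ r * (ψ r / ψ s) := by field_simp [(hψ_pos s hs0).ne']
      _ ≤ s / ψ r * (C * (r / s) ^ β) := by gcongr; exact hscal s hs
      _ = k * s ^ (1 - β) := by
        rw [hk, div_rpow hr.le hs0.le, rpow_sub hs0, rpow_one]
        field_simp
  calc ∫ s in Ioo a r, s / ψ s ≤ ∫ s in Ioo a r, k * s ^ (1 - β) :=
        setIntegral_mono_on ((hψ_int r hr).mono_set hsub) (hint.mono_set hsub)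
          measurableSet_Ioo hpt
    _ ≤ ∫ s in Ioo 0 r, k * s ^ (1 - β) :=
        setIntegral_mono_set hint (ae_restrict_of_forall_mem measurableSet_Ioo fun s hs =>
          mul_nonneg hk0 (rpow_nonneg hs.1.le _)) hsub.eventuallyLE
    _ = k * (r ^ (2 - β) / (2 - β)) := by
        rw [integral_const_mul, integral_Ioo_zero_rpow (by linarith) hr.le]
        ring_nf
    _ = C / (2 - β) * (r ^ 2 / ψ r) := by
        have hpow : r ^ β * r ^ (2 - β) = r ^ 2 := by rw [← rpow_add hr]; norm_num
        rw [hk, ← hpow]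
        field_simp

variable {Φ : ℝ → ℝ} (hΦ : ∀ r : ℝ, 0 < r → Φ r = r ^ 2 / (2 * ∫ s in Ioo (0:ℝ) r, s / ψ s))

include hψ_pos hψ_mono hψ_int hΦ in
lemma mul_le_Phi_iff {c r : ℝ} (hr : 0 < r) :
    c * ψ r ≤ Φ r ↔ 2 * c * (ψ r * integralDiv ψ r) ≤ r ^ 2 := by
  have hI := integralDiv_pos hψ_pos hψ_mono hψ_int hr
  rw [hΦ r hr]
  change _ ≤ r ^ 2 / (2 * integralDiv ψ r) ↔ _
  rw [le_div_iff₀ (by positivity)]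
  ring_nf

include hψ_pos hψ_mono hψ_int hΦ in
lemma exists_scaling_of_le_Phi {S : Set ℝ} (hS : S.OrdConnected) (hS_pos : S ⊆ Ioi 0)
    {c : ℝ} (hc : 0 < c) (hc1 : c ≤ 1) (h : ∀ t ∈ S, c * ψ t ≤ Φ t) :
    ∃ β C : ℝ, 0 < β ∧ β < 2 ∧ 1 ≤ C ∧
      ∀ r ∈ S, ∀ R ∈ S, r ≤ R → ψ R / ψ r ≤ C * (R / r) ^ β := by
  have hlog_pos : 0 < logb 2 (1 + c) := logb_pos one_lt_two (by linarith)
  have hlog_le : logb 2 (1 + c) ≤ 1 :=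
    (logb_le_logb_of_le one_lt_two (by linarith) (by linarith)).trans_eq
      (logb_self_eq_one one_lt_two)
  refine ⟨2 - logb 2 (1 + c), (1 + c) / c, by linarith, by linarith,
    (one_le_div hc).2 (by linarith), fun r hr R hR hrR => ?_⟩
  refine div_le_rpow_of_two_mul_le hψ_pos hψ_mono hψ_int hS hS_pos hc (fun t ht => ?_) hr hR hrR
  exact (mul_le_Phi_iff hψ_pos hψ_mono hψ_int hΦ (hS_pos ht)).1 (h t ht)

include hψ_pos hψ_mono hψ_int hΦ in
lemma exists_le_Phi_of_scaling {β C : ℝ} (hβ0 : 0 ≤ β) (hβ2 : β < 2) (hC : 1 ≤ C) :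
    ∃ c : ℝ, 0 < c ∧ c ≤ 1 ∧ ∀ r, 0 < r →
      (∀ s, 0 < s → s < r → ψ r / ψ s ≤ C * (r / s) ^ β) → c * ψ r ≤ Φ r := by
  refine ⟨(2 - β) / (2 * C), by positivity, (div_le_one (by positivity)).2 (by linarith),
    fun r hr hscal => ?_⟩
  have hψr := hψ_pos r hr
  have h2β : 0 < 2 - β := by linarith
  have hI : integralDiv ψ r ≤ C / (2 - β) * (r ^ 2 / ψ r) :=
    integral_Ioo_div_le_of_scaling hψ_pos hψ_int le_rfl hr hβ2 (by linarith)
      fun s hs => hscal s hs.1 hs.2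
  rw [mul_le_Phi_iff hψ_pos hψ_mono hψ_int hΦ hr]
  calc 2 * ((2 - β) / (2 * C)) * (ψ r * integralDiv ψ r)
      ≤ 2 * ((2 - β) / (2 * C)) * (ψ r * (C / (2 - β) * (r ^ 2 / ψ r))) := by
        gcongr
    _ = r ^ 2 := by
        field_simp

include hψ_pos hψ_int in
lemma mul_integralDiv_le_of_scaling_ge {a β C : ℝ} (ha : 0 < a) (hβ2 : β < 2) (hC : 0 ≤ C)
    (hscal : ∀ r R, a ≤ r → r ≤ R → ψ R / ψ r ≤ C * (R / r) ^ β) {r : ℝ} (har : a ≤ r) :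
    ψ r * integralDiv ψ r ≤ (integralDiv ψ a * C * ψ a / a ^ 2 + C / (2 - β)) * r ^ 2 := by
  have hr : 0 < r := ha.trans_le har
  have hψa := hψ_pos a ha
  have hψr := hψ_pos r hr
  have h2β : 0 < 2 - β := by linarith
  -- `U^a` with `β < 2` makes `ψ` grow at most quadratically, which absorbs the part over `(0, a)`
  have hψ_growth : ψ r ≤ C * ψ a * (r / a) ^ 2 := by
    have h := hscal a r le_rfl har
    rw [div_le_iff₀ hψa] at h
    calc ψ r ≤ C * (r / a) ^ β * ψ a := h
      _ ≤ C * (r / a) ^ (2 : ℝ) * ψ a := by gcongr; exact (one_le_div ha).2 har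
      _ = C * ψ a * (r / a) ^ 2 := by rw [rpow_two]; ring
  have hhead : ψ r * integralDiv ψ a ≤ integralDiv ψ a * C * ψ a / a ^ 2 * r ^ 2 := calc
    _ ≤ C * ψ a * (r / a) ^ 2 * integralDiv ψ a := by
      gcongr; exact integralDiv_nonneg hψ_pos a
    _ = _ := by field_simp
  have htail : ψ r * ∫ s in Ioo a r, s / ψ s ≤ C / (2 - β) * r ^ 2 := calc
    _ ≤ ψ r * (C / (2 - β) * (r ^ 2 / ψ r)) := by
      gcongr
      exact integral_Ioo_div_le_of_scaling hψ_pos hψ_int ha.le hr hβ2 hC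
        fun s hs => hscal s r hs.1.le hs.2.le
    _ = _ := by field_simp
  rw [integralDiv_eq_add hψ_int ha har, mul_add, add_mul]
  exact add_le_add hhead htail

include hψ_pos hψ_mono hψ_int hΦ in
lemma exists_le_Phi_of_scaling_ge {a β C : ℝ} (ha : 0 < a) (hβ0 : 0 ≤ β) (hβ2 : β < 2)
    (hC : 1 ≤ C) (hscal : ∀ r R, a ≤ r → r ≤ R → ψ R / ψ r ≤ C * (R / r) ^ β) :
    ∃ c : ℝ, 0 < c ∧ c ≤ 1 ∧ ∀ r, a ≤ r → c * ψ r ≤ Φ r := by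
  set K := integralDiv ψ a * C * ψ a / a ^ 2 + C / (2 - β)
  have hK : 1 / 2 ≤ K := by
    have : 1 / 2 ≤ C / (2 - β) := by rw [div_le_div_iff₀ two_pos (by linarith)]; linarith
    have : 0 ≤ integralDiv ψ a * C * ψ a / a ^ 2 := by
      have := integralDiv_nonneg hψ_pos a
      have := hψ_pos a ha
      positivity
    linarith
  refine ⟨1 / (2 * K), by positivity, (div_le_one (by positivity)).2 (by linarith),
    fun r har => ?_⟩
  rw [mul_le_Phi_iff hψ_pos hψ_mono hψ_int hΦ (ha.trans_le har)]
  calc 2 * (1 / (2 * K)) * (ψ r * integralDiv ψ r) ≤ 2 * (1 / (2 * K)) * (K * r ^ 2) :=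
        mul_le_mul_of_nonneg_left
          (mul_integralDiv_le_of_scaling_ge hψ_pos hψ_int ha hβ2 (by linarith) hscal har)
          (by positivity)
    _ = r ^ 2 := by field_simp

end IntegralDiv

/-- With `Φ(r) = r²/(2∫₀^r s/ψ(s) ds)` for a non-decreasing
`ψ : (0,∞) → (0,∞)` and `a ∈ (0,∞)`:
(1) `∃ c ∈ (0,1]` with `c ψ(r) ≤ Φ(r)` for all `0 < r < a` iff `ψ` satisfies
`U_a(β,C)` for some `β ∈ (0,2)`, `C ≥ 1`; likewise with "for all `r > 0`" and the
global condition `U(β,C)`;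
(2) `∃ c ∈ (0,1]` with `c ψ(r) ≤ Φ(r)` for all `r ≥ a` iff `ψ` satisfies
`U^a(β,C)` for some `β ∈ (0,2)`, `C ≥ 1`. -/
theorem stmt_7 (ψ Φ : ℝ → ℝ)
    (hψ_pos : ∀ r : ℝ, 0 < r → 0 < ψ r)
    (hψ_mono : ∀ r s : ℝ, 0 < r → r ≤ s → ψ r ≤ ψ s)
    (hψ_int : ∀ r : ℝ, 0 < r → IntegrableOn (fun s => s / ψ s) (Ioo 0 r))
    (hΦ : ∀ r : ℝ, 0 < r → Φ r = r ^ 2 / (2 * ∫ s in Ioo (0:ℝ) r, s / ψ s))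
    (a : ℝ) (ha : 0 < a) :
    ((∃ c : ℝ, 0 < c ∧ c ≤ 1 ∧ ∀ r : ℝ, 0 < r → r < a → c * ψ r ≤ Φ r) ↔
      (∃ β C : ℝ, 0 < β ∧ β < 2 ∧ 1 ≤ C ∧
        ∀ r R : ℝ, 0 < r → r ≤ R → R < a → ψ R / ψ r ≤ C * (R / r) ^ β)) ∧
    ((∃ c : ℝ, 0 < c ∧ c ≤ 1 ∧ ∀ r : ℝ, 0 < r → c * ψ r ≤ Φ r) ↔
      (∃ β C : ℝ, 0 < β ∧ β < 2 ∧ 1 ≤ C ∧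
        ∀ r R : ℝ, 0 < r → r ≤ R → ψ R / ψ r ≤ C * (R / r) ^ β)) ∧
    ((∃ c : ℝ, 0 < c ∧ c ≤ 1 ∧ ∀ r : ℝ, a ≤ r → c * ψ r ≤ Φ r) ↔
      (∃ β C : ℝ, 0 < β ∧ β < 2 ∧ 1 ≤ C ∧
        ∀ r R : ℝ, a ≤ r → r ≤ R → ψ R / ψ r ≤ C * (R / r) ^ β)) := by
  refine ⟨⟨?_, ?_⟩, ⟨?_, ?_⟩, ⟨?_, ?_⟩⟩
  · rintro ⟨c, hc, hc1, h⟩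
    obtain ⟨β, C, hβ0, hβ2, hC, hscal⟩ := exists_scaling_of_le_Phi hψ_pos hψ_mono hψ_int hΦ
      ordConnected_Ioo (fun _ ht => ht.1) hc hc1 fun t ht => h t ht.1 ht.2
    exact ⟨β, C, hβ0, hβ2, hC, fun r R hr hrR hRa =>
      hscal r ⟨hr, hrR.trans_lt hRa⟩ R ⟨hr.trans_le hrR, hRa⟩ hrR⟩
  · rintro ⟨β, C, hβ0, hβ2, hC, hscal⟩
    obtain ⟨c, hc, hc1, hle⟩ := exists_le_Phi_of_scaling hψ_pos hψ_mono hψ_int hΦ hβ0.le hβ2 hC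
    exact ⟨c, hc, hc1, fun r hr hra => hle r hr fun s hs hsr => hscal s r hs hsr.le hra⟩
  · rintro ⟨c, hc, hc1, h⟩
    obtain ⟨β, C, hβ0, hβ2, hC, hscal⟩ := exists_scaling_of_le_Phi hψ_pos hψ_mono hψ_int hΦ
      ordConnected_Ioi subset_rfl hc hc1 h
    exact ⟨β, C, hβ0, hβ2, hC, fun r R hr hrR => hscal r hr R (hr.trans_le hrR) hrR⟩
  · rintro ⟨β, C, hβ0, hβ2, hC, hscal⟩
    obtain ⟨c, hc, hc1, hle⟩ := exists_le_Phi_of_scaling hψ_pos hψ_mono hψ_int hΦ hβ0.le hβ2 hC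
    exact ⟨c, hc, hc1, fun r hr => hle r hr fun s hs hsr => hscal s r hs hsr.le⟩
  · rintro ⟨c, hc, hc1, h⟩
    obtain ⟨β, C, hβ0, hβ2, hC, hscal⟩ := exists_scaling_of_le_Phi hψ_pos hψ_mono hψ_int hΦ
      ordConnected_Ici (fun _ ht => ha.trans_le ht) hc hc1 h
    exact ⟨β, C, hβ0, hβ2, hC, fun r R har hrR => hscal r har R (har.trans hrR) hrR⟩
  · rintro ⟨β, C, hβ0, hβ2, hC, hscal⟩
    exact exists_le_Phi_of_scaling_ge hψ_pos hψ_mono hψ_int hΦ ha hβ0.le hβ2 hC hscal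
end

section
/- Let ψ:(0,∞)→(0,∞) be non-decreasing with ∫₀^r s/ψ(s) ds < ∞ for every r>0, and let Φ(r) := r²/(2∫₀^r s/ψ(s) ds). If lim_{λ→0⁺} Φ(λ)/ψ(λ) = 0, then Φ varies regularly at 0 with index 2, i.e. for every κ>0, lim_{x→0⁺} Φ(κx)/Φ(x) = κ². Similarly, if lim_{λ→∞} Φ(λ)/ψ(λ) = 0, then for every κ>0, lim_{x→∞} Φ(κx)/Φ(x) = κ². -/
open MeasureTheory Set Filter Topology

/-! Write `J(r) = ∫₀^r s/ψ(s) ds` (`weightIntegral ψ r`), so that `Φ(κx)/Φ(x) = κ² J(x)/J(κx)`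
and it suffices to show `J(κx)/J(x) → 1`. For `1 ≤ κ`, monotonicity of `ψ` gives
`0 ≤ J(κx) - J(x) ≤ ((κx)² - x²)/(2ψ(x))`, i.e. `0 ≤ J(κx)/J(x) - 1 ≤ (κ² - 1) Φ(x)/ψ(x)`,
which tends to `0` by hypothesis. The case `κ < 1` follows by applying the case `κ⁻¹ > 1` at the
point `κx`. -/

lemma tendsto_comp_mul_div_self_of_forall_one_le {L : Filter ℝ} {g : ℝ → ℝ}
    (hL : ∀ c : ℝ, 0 < c → Tendsto (c * ·) L L)
    (hg : ∀ κ : ℝ, 1 ≤ κ → Tendsto (fun x => g (κ * x) / g x) L (𝓝 1))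
    {κ : ℝ} (hκ : 0 < κ) : Tendsto (fun x => g (κ * x) / g x) L (𝓝 1) := by
  rcases le_total 1 κ with h1κ | hκ1
  · exact hg κ h1κ
  · have hinv := ((hg κ⁻¹ (one_le_inv₀ hκ |>.2 hκ1)).comp (hL κ hκ)).inv₀ one_ne_zero
    simpa [Function.comp_def, inv_mul_cancel_left₀ hκ.ne'] using hinv

noncomputable def weightIntegral (ψ : ℝ → ℝ) (r : ℝ) : ℝ := ∫ s in Ioo 0 r, s / ψ s

section weightIntegral

variable {ψ : ℝ → ℝ} {a b r : ℝ}

lemma weightIntegral_eq_intervalIntegral (hr : 0 ≤ r) :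
    weightIntegral ψ r = ∫ s in 0..r, s / ψ s := by
  rw [weightIntegral, intervalIntegral.integral_of_le hr, integral_Ioc_eq_integral_Ioo]

lemma intervalIntegrable_div_of_integrableOn_Ioo
    (hψ_int : ∀ r : ℝ, 0 < r → IntegrableOn (fun s => s / ψ s) (Ioo 0 r))
    (ha : 0 ≤ a) (hab : a ≤ b) : IntervalIntegrable (fun s => s / ψ s) volume a b := by
  rcases hab.lt_or_eq with hab | rfl
  · have hb : 0 < b := ha.trans_lt hab
    have h0b : IntervalIntegrable (fun s => s / ψ s) volume 0 b :=
      (intervalIntegrable_iff_integrableOn_Ioc_of_le hb.le).2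
        ((integrableOn_Ioc_iff_integrableOn_Ioo).2 (hψ_int b hb))
    exact h0b.mono_set (uIcc_subset_uIcc (mem_uIcc_of_le ha hab.le) right_mem_uIcc)
  · exact IntervalIntegrable.refl

lemma weightIntegral_sub
    (hψ_int : ∀ r : ℝ, 0 < r → IntegrableOn (fun s => s / ψ s) (Ioo 0 r))
    (ha : 0 ≤ a) (hab : a ≤ b) :
    weightIntegral ψ b - weightIntegral ψ a = ∫ s in a..b, s / ψ s := by
  rw [weightIntegral_eq_intervalIntegral (ha.trans hab), weightIntegral_eq_intervalIntegral ha,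
    intervalIntegral.integral_interval_sub_left
      (intervalIntegrable_div_of_integrableOn_Ioo hψ_int le_rfl (ha.trans hab))
      (intervalIntegrable_div_of_integrableOn_Ioo hψ_int le_rfl ha)]

lemma weightIntegral_pos (hψ_pos : ∀ r : ℝ, 0 < r → 0 < ψ r)
    (hψ_int : ∀ r : ℝ, 0 < r → IntegrableOn (fun s => s / ψ s) (Ioo 0 r)) (hr : 0 < r) :
    0 < weightIntegral ψ r := by
  rw [weightIntegral_eq_intervalIntegral hr.le]
  exact intervalIntegral.intervalIntegral_pos_of_pos_on
    (intervalIntegrable_div_of_integrableOn_Ioo hψ_int le_rfl hr.le)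
    (fun s hs => div_pos hs.1 (hψ_pos s hs.1)) hr

lemma weightIntegral_mono (hψ_pos : ∀ r : ℝ, 0 < r → 0 < ψ r)
    (hψ_int : ∀ r : ℝ, 0 < r → IntegrableOn (fun s => s / ψ s) (Ioo 0 r))
    (ha : 0 < a) (hab : a ≤ b) : weightIntegral ψ a ≤ weightIntegral ψ b := by
  have hnonneg : 0 ≤ ∫ s in a..b, s / ψ s :=
    intervalIntegral.integral_nonneg hab fun s hs =>
      div_nonneg (ha.le.trans hs.1) (hψ_pos s (ha.trans_le hs.1)).le
  linarith [weightIntegral_sub hψ_int ha.le hab]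

lemma weightIntegral_sub_le (hψ_pos : ∀ r : ℝ, 0 < r → 0 < ψ r)
    (hψ_mono : ∀ r s : ℝ, 0 < r → r ≤ s → ψ r ≤ ψ s)
    (hψ_int : ∀ r : ℝ, 0 < r → IntegrableOn (fun s => s / ψ s) (Ioo 0 r))
    (ha : 0 < a) (hab : a ≤ b) :
    weightIntegral ψ b - weightIntegral ψ a ≤ (b ^ 2 - a ^ 2) / (2 * ψ a) := by
  have hψa := hψ_pos a ha
  calc weightIntegral ψ b - weightIntegral ψ a = ∫ s in a..b, s / ψ s :=
        weightIntegral_sub hψ_int ha.le hab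
    _ ≤ ∫ s in a..b, s / ψ a := by
        refine intervalIntegral.integral_mono_on hab
          (intervalIntegrable_div_of_integrableOn_Ioo hψ_int ha.le hab)
          (intervalIntegral.intervalIntegrable_id.div_const _) fun s hs => ?_
        exact div_le_div_of_nonneg_left (ha.le.trans hs.1) hψa (hψ_mono a s ha hs.1)
    _ = (b ^ 2 - a ^ 2) / (2 * ψ a) := by
        rw [intervalIntegral.integral_div, integral_id]
        field_simp

end weightIntegral

lemma tendsto_weightIntegral_mul_div_self {ψ : ℝ → ℝ} {L : Filter ℝ}
    (hψ_pos : ∀ r : ℝ, 0 < r → 0 < ψ r)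
    (hψ_mono : ∀ r s : ℝ, 0 < r → r ≤ s → ψ r ≤ ψ s)
    (hψ_int : ∀ r : ℝ, 0 < r → IntegrableOn (fun s => s / ψ s) (Ioo 0 r))
    (hL : ∀ᶠ x in L, 0 < x)
    (h : Tendsto (fun x => x ^ 2 / (2 * weightIntegral ψ x) / ψ x) L (𝓝 0))
    {κ : ℝ} (hκ : 1 ≤ κ) :
    Tendsto (fun x => weightIntegral ψ (κ * x) / weightIntegral ψ x) L (𝓝 1) := by
  have hbound : ∀ᶠ x in L, ‖weightIntegral ψ (κ * x) / weightIntegral ψ x - 1‖ ≤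
      (κ ^ 2 - 1) * (x ^ 2 / (2 * weightIntegral ψ x) / ψ x) := by
    filter_upwards [hL] with x hx
    have hJx := weightIntegral_pos hψ_pos hψ_int hx
    have hxκx : x ≤ κ * x := le_mul_of_one_le_left hx.le hκ
    have hmono := weightIntegral_mono hψ_pos hψ_int hx hxκx
    have hsub := weightIntegral_sub_le hψ_pos hψ_mono hψ_int hx hxκx
    have hψx := hψ_pos x hx
    have hlhs : weightIntegral ψ (κ * x) / weightIntegral ψ x - 1 =
        (weightIntegral ψ (κ * x) - weightIntegral ψ x) / weightIntegral ψ x := by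
      field_simp
    have hrhs : (κ ^ 2 - 1) * (x ^ 2 / (2 * weightIntegral ψ x) / ψ x) =
        ((κ * x) ^ 2 - x ^ 2) / (2 * ψ x) / weightIntegral ψ x := by
      field_simp
    rw [hlhs, hrhs, Real.norm_of_nonneg (div_nonneg (sub_nonneg.2 hmono) hJx.le)]
    exact div_le_div_of_nonneg_right hsub hJx.le
  have hlim : Tendsto (fun x => (κ ^ 2 - 1) * (x ^ 2 / (2 * weightIntegral ψ x) / ψ x))
      L (𝓝 0) := by
    simpa using h.const_mul (κ ^ 2 - 1)
  simpa using (squeeze_zero_norm' hbound hlim).add_const 1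

lemma tendsto_mul_div_self_of_tendsto_div_zero {ψ Φ : ℝ → ℝ} {L : Filter ℝ}
    (hψ_pos : ∀ r : ℝ, 0 < r → 0 < ψ r)
    (hψ_mono : ∀ r s : ℝ, 0 < r → r ≤ s → ψ r ≤ ψ s)
    (hψ_int : ∀ r : ℝ, 0 < r → IntegrableOn (fun s => s / ψ s) (Ioo 0 r))
    (hΦ : ∀ r : ℝ, 0 < r → Φ r = r ^ 2 / (2 * weightIntegral ψ r))
    (hL_pos : ∀ᶠ x in L, 0 < x) (hL_mul : ∀ c : ℝ, 0 < c → Tendsto (c * ·) L L)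
    (h : Tendsto (fun x => Φ x / ψ x) L (𝓝 0)) {κ : ℝ} (hκ : 0 < κ) :
    Tendsto (fun x => Φ (κ * x) / Φ x) L (𝓝 (κ ^ 2)) := by
  have hJ : Tendsto (fun x => x ^ 2 / (2 * weightIntegral ψ x) / ψ x) L (𝓝 0) :=
    h.congr' <| by filter_upwards [hL_pos] with x hx; rw [hΦ x hx]
  have hratio := tendsto_comp_mul_div_self_of_forall_one_le hL_mul
    (fun κ hκ => tendsto_weightIntegral_mul_div_self hψ_pos hψ_mono hψ_int hL_pos hJ hκ) hκ
  have hlim := (hratio.inv₀ one_ne_zero).const_mul (κ ^ 2)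
  rw [inv_one, mul_one] at hlim
  refine hlim.congr' ?_
  filter_upwards [hL_pos] with x hx
  have hJx := weightIntegral_pos hψ_pos hψ_int hx
  have hJκx := weightIntegral_pos hψ_pos hψ_int (mul_pos hκ hx)
  rw [hΦ x hx, hΦ _ (mul_pos hκ hx)]
  field_simp

/-- With `Φ(r) = r²/(2∫₀^r s/ψ(s) ds)` for a non-decreasing
`ψ : (0,∞) → (0,∞)`: if `Φ(λ)/ψ(λ) → 0` as `λ → 0⁺`, then `Φ` varies regularly
at `0` with index `2`, i.e. `Φ(κx)/Φ(x) → κ²` as `x → 0⁺` for every `κ > 0`;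
similarly, if `Φ(λ)/ψ(λ) → 0` as `λ → ∞`, then `Φ(κx)/Φ(x) → κ²` as `x → ∞`
for every `κ > 0`. -/
theorem stmt_8 (ψ Φ : ℝ → ℝ)
    (hψ_pos : ∀ r : ℝ, 0 < r → 0 < ψ r)
    (hψ_mono : ∀ r s : ℝ, 0 < r → r ≤ s → ψ r ≤ ψ s)
    (hψ_int : ∀ r : ℝ, 0 < r → IntegrableOn (fun s => s / ψ s) (Ioo 0 r))
    (hΦ : ∀ r : ℝ, 0 < r → Φ r = r ^ 2 / (2 * ∫ s in Ioo (0:ℝ) r, s / ψ s)) :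
    ((Tendsto (fun l => Φ l / ψ l) (nhdsWithin 0 (Ioi 0)) (nhds 0)) →
      ∀ κ : ℝ, 0 < κ →
        Tendsto (fun x => Φ (κ * x) / Φ x) (nhdsWithin 0 (Ioi 0)) (nhds (κ ^ 2))) ∧
    ((Tendsto (fun l => Φ l / ψ l) atTop (nhds 0)) →
      ∀ κ : ℝ, 0 < κ →
        Tendsto (fun x => Φ (κ * x) / Φ x) atTop (nhds (κ ^ 2))) := by
  refine ⟨fun h κ hκ => ?_, fun h κ hκ => ?_⟩
  · refine tendsto_mul_div_self_of_tendsto_div_zero hψ_pos hψ_mono hψ_int hΦ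
      self_mem_nhdsWithin (fun c hc => ?_) h hκ
    have hmaps := (continuous_const_mul c).continuousWithinAt.tendsto_nhdsWithin
      (x := 0) (s := Ioi 0) (t := Ioi 0) fun x hx => mul_pos hc hx
    rwa [mul_zero] at hmaps
  · exact tendsto_mul_div_self_of_tendsto_div_zero hψ_pos hψ_mono hψ_int hΦ
      (eventually_gt_atTop 0) (fun c hc => tendsto_id.const_mul_atTop hc) h hκ
end

section
/- Let ψ:(0,∞)→(0,∞) be non-decreasing with ∫₀^r s/ψ(s) ds < ∞ for every r>0, let Φ(r) := r²/(2∫₀^r s/ψ(s) ds), and let 𝒦(s) := sup_{0<b≤s} Φ(b)/b. Suppose Φ satisfies L_a(δ,C̃) with δ>1, C̃∈(0,1] and a∈(0,∞]. Then for every 0<t<a: Φ(t)/t ≤ 𝒦(t) ≤ C̃⁻¹·Φ(t)/t; and for all 0<s≤t<a: C̃²(t/s)^{δ−1} ≤ 𝒦(t)/𝒦(s) ≤ C̃⁻¹·(t/s). -/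
open MeasureTheory Set
open scoped ENNReal

/-!
With `δ ≥ 1`, the scaling condition `Φ(t)/Φ(b) ≥ C̃ (t/b)^δ` gives `Φ(b)/b ≤ C̃⁻¹ Φ(t)/t` for
`b ≤ t`, so the supremum `𝒦(t)` is squeezed between `Φ(t)/t` and `C̃⁻¹ Φ(t)/t`. The ratio
`𝒦(t)/𝒦(s)` is then within a factor `C̃^{±1}` of `(Φ(t)/Φ(s))·(s/t)`; the scaling condition
bounds `Φ(t)/Φ(s)` below by `C̃ (t/s)^δ`, and monotonicity of `r ↦ ∫₀^r s/ψ(s) ds` bounds it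
above by `(t/s)²`.
-/

/-- `𝒦(s) := sup_{0 < b ≤ s} Φ(b)/b`. -/
noncomputable def scaleK (Φ : ℝ → ℝ) (s : ℝ) : ℝ :=
  sSup ((fun b => Φ b / b) '' Set.Ioc 0 s)

theorem setIntegral_Ioo_pos {f : ℝ → ℝ} {a b : ℝ} (hab : a < b)
    (hf_pos : ∀ x ∈ Ioo a b, 0 < f x) (hf : IntegrableOn f (Ioo a b)) :
    0 < ∫ x in Ioo a b, f x := by
  rw [← integral_Ioc_eq_integral_Ioo, ← intervalIntegral.integral_of_le hab.le]
  refine intervalIntegral.intervalIntegral_pos_of_pos_on ?_ hf_pos hab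
  exact (intervalIntegrable_iff_integrableOn_Ioo_of_le hab.le).2 hf

section Integral

variable {ψ : ℝ → ℝ}

theorem sq_div_two_integral_pos (hψ_pos : ∀ r : ℝ, 0 < r → 0 < ψ r)
    (hψ_int : ∀ r : ℝ, 0 < r → IntegrableOn (fun s => s / ψ s) (Ioo 0 r))
    {r : ℝ} (hr : 0 < r) :
    0 < r ^ 2 / (2 * ∫ s in Ioo (0:ℝ) r, s / ψ s) := by
  have hI := setIntegral_Ioo_pos hr (fun x hx => div_pos hx.1 (hψ_pos x hx.1)) (hψ_int r hr)
  positivity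

theorem sq_div_two_integral_ratio_le (hψ_pos : ∀ r : ℝ, 0 < r → 0 < ψ r)
    (hψ_int : ∀ r : ℝ, 0 < r → IntegrableOn (fun s => s / ψ s) (Ioo 0 r))
    {s t : ℝ} (hs : 0 < s) (hst : s ≤ t) :
    (t ^ 2 / (2 * ∫ x in Ioo (0:ℝ) t, x / ψ x)) / (s ^ 2 / (2 * ∫ x in Ioo (0:ℝ) s, x / ψ x))
      ≤ (t / s) ^ 2 := by
  have ht := hs.trans_le hst
  have hpos : ∀ r, 0 < r → ∀ x ∈ Ioo (0:ℝ) r, 0 < x / ψ x :=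
    fun r _ x hx => div_pos hx.1 (hψ_pos x hx.1)
  have hIs := setIntegral_Ioo_pos hs (hpos s hs) (hψ_int s hs)
  have hIt := setIntegral_Ioo_pos ht (hpos t ht) (hψ_int t ht)
  have hI_mono : (∫ x in Ioo (0:ℝ) s, x / ψ x) ≤ ∫ x in Ioo (0:ℝ) t, x / ψ x :=
    setIntegral_mono_set (hψ_int t ht)
      (ae_restrict_of_forall_mem measurableSet_Ioo fun x hx => (hpos t ht x hx).le)
      (Ioo_subset_Ioo_right hst).eventuallyLE
  calc _ = (t / s) ^ 2 * ((∫ x in Ioo (0:ℝ) s, x / ψ x) / ∫ x in Ioo (0:ℝ) t, x / ψ x) := by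
        field_simp
    _ ≤ (t / s) ^ 2 := mul_le_of_le_one_right (by positivity) ((div_le_one hIt).2 hI_mono)

end Integral

section ScaleK

variable {Φ : ℝ → ℝ} {t M : ℝ}

theorem scaleK_le (ht : 0 < t) (h : ∀ b ∈ Ioc 0 t, Φ b / b ≤ M) : scaleK Φ t ≤ M :=
  csSup_le ((nonempty_Ioc.2 ht).image _) (forall_mem_image.2 h)

theorem div_le_scaleK (ht : 0 < t) (h : ∀ b ∈ Ioc 0 t, Φ b / b ≤ M) : Φ t / t ≤ scaleK Φ t :=
  le_csSup ⟨M, forall_mem_image.2 h⟩ (mem_image_of_mem _ ⟨ht, le_rfl⟩)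

theorem div_le_inv_mul_div_of_scaling {δ C b : ℝ} (hδ : 1 ≤ δ) (hC : 0 < C) (hb : 0 < b)
    (hbt : b ≤ t) (hΦb : 0 < Φ b) (hL : C * (t / b) ^ δ ≤ Φ t / Φ b) :
    Φ b / b ≤ C⁻¹ * (Φ t / t) := by
  have ht := hb.trans_le hbt
  have hlin : C * (t / b) * Φ b ≤ Φ t := by
    rw [← le_div_iff₀ hΦb]
    refine le_trans ?_ hL
    gcongr
    exact Real.self_le_rpow_of_one_le ((one_le_div hb).2 hbt) hδ
  calc Φ b / b = C⁻¹ * (C * (t / b) * Φ b / t) := by field_simp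
    _ ≤ C⁻¹ * (Φ t / t) := by gcongr

theorem scaleK_bounds_of_scaling {δ C : ℝ} (hδ : 1 ≤ δ) (hC : 0 < C) (ht : 0 < t)
    (hΦ_pos : ∀ b ∈ Ioc 0 t, 0 < Φ b) (hL : ∀ b ∈ Ioc 0 t, C * (t / b) ^ δ ≤ Φ t / Φ b) :
    Φ t / t ≤ scaleK Φ t ∧ scaleK Φ t ≤ C⁻¹ * (Φ t / t) := by
  have h : ∀ b ∈ Ioc 0 t, Φ b / b ≤ C⁻¹ * (Φ t / t) := fun b hb =>
    div_le_inv_mul_div_of_scaling hδ hC hb.1 hb.2 (hΦ_pos b hb) (hL b hb)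
  exact ⟨div_le_scaleK ht h, scaleK_le ht h⟩

end ScaleK

theorem ratio_bounds_of_le_of_le_inv_mul {c x y X Y : ℝ} (hc : 0 < c) (hx : 0 < x) (hy : 0 < y)
    (hX : x ≤ X ∧ X ≤ c⁻¹ * x) (hY : y ≤ Y ∧ Y ≤ c⁻¹ * y) :
    c * (x / y) ≤ X / Y ∧ X / Y ≤ c⁻¹ * (x / y) := by
  constructor
  · calc c * (x / y) = x / (c⁻¹ * y) := by field_simp
      _ ≤ X / Y := div_le_div₀ (hx.trans_le hX.1).le hX.1 (hy.trans_le hY.1) hY.2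
  · calc X / Y ≤ c⁻¹ * x / y := div_le_div₀ (by positivity) hX.2 hy hY.1
      _ = c⁻¹ * (x / y) := mul_div_assoc _ _ _

theorem stmt_9_general (ψ Φ : ℝ → ℝ)
    (hψ_pos : ∀ r : ℝ, 0 < r → 0 < ψ r)
    (hψ_int : ∀ r : ℝ, 0 < r → IntegrableOn (fun s => s / ψ s) (Ioo 0 r))
    (hΦ : ∀ r : ℝ, 0 < r → Φ r = r ^ 2 / (2 * ∫ s in Ioo (0:ℝ) r, s / ψ s))
    (a : ℝ≥0∞) (δ Cl : ℝ) (hδ : 1 < δ) (hCl : 0 < Cl)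
    (hL : ∀ r R : ℝ, 0 < r → r ≤ R → ENNReal.ofReal R < a →
      Cl * (R / r) ^ δ ≤ Φ R / Φ r) :
    (∀ t : ℝ, 0 < t → ENNReal.ofReal t < a →
      Φ t / t ≤ scaleK Φ t ∧ scaleK Φ t ≤ Cl⁻¹ * (Φ t / t)) ∧
    (∀ s t : ℝ, 0 < s → s ≤ t → ENNReal.ofReal t < a →
      Cl ^ 2 * (t / s) ^ (δ - 1) ≤ scaleK Φ t / scaleK Φ s ∧
      scaleK Φ t / scaleK Φ s ≤ Cl⁻¹ * (t / s)) := by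
  have hΦ_pos : ∀ r, 0 < r → 0 < Φ r := fun r hr =>
    (hΦ r hr).symm ▸ sq_div_two_integral_pos hψ_pos hψ_int hr
  have hK : ∀ t : ℝ, 0 < t → ENNReal.ofReal t < a →
      Φ t / t ≤ scaleK Φ t ∧ scaleK Φ t ≤ Cl⁻¹ * (Φ t / t) := fun t ht hta =>
    scaleK_bounds_of_scaling hδ.le hCl ht (fun b hb => hΦ_pos b hb.1)
      (fun b hb => hL b t hb.1 hb.2 hta)
  refine ⟨hK, fun s t hs hst hta => ?_⟩
  have ht := hs.trans_le hst
  have hsa := (ENNReal.ofReal_le_ofReal hst).trans_lt hta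
  have hratio : Φ t / t / (Φ s / s) = Φ t / Φ s * (s / t) := by field_simp
  obtain ⟨hlow, hup⟩ := hratio ▸ ratio_bounds_of_le_of_le_inv_mul hCl (div_pos (hΦ_pos t ht) ht)
    (div_pos (hΦ_pos s hs) hs) (hK t ht hta) (hK s hs hsa)
  have hΦ_upper : Φ t / Φ s ≤ (t / s) ^ 2 := by
    rw [hΦ s hs, hΦ t ht]
    exact sq_div_two_integral_ratio_le hψ_pos hψ_int hs hst
  constructor
  · calc Cl ^ 2 * (t / s) ^ (δ - 1) = Cl * (Cl * (t / s) ^ δ * (s / t)) := by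
          rw [Real.rpow_sub_one (by positivity)]; field_simp
      _ ≤ Cl * (Φ t / Φ s * (s / t)) := by gcongr; exact hL s t hs hst hta
      _ ≤ _ := hlow
  · calc _ ≤ Cl⁻¹ * (Φ t / Φ s * (s / t)) := hup
      _ ≤ Cl⁻¹ * ((t / s) ^ 2 * (s / t)) := by gcongr
      _ = Cl⁻¹ * (t / s) := by field_simp

/-- With `Φ(r) = r²/(2∫₀^r s/ψ(s) ds)` and
`𝒦(s) := sup_{0 < b ≤ s} Φ(b)/b`: if `Φ` satisfies `L_a(δ, C̃)` with `δ > 1`,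
`C̃ ∈ (0,1]`, `a ∈ (0,∞]`, then for `0 < t < a` we have
`Φ(t)/t ≤ 𝒦(t) ≤ C̃⁻¹ Φ(t)/t`, and for `0 < s ≤ t < a`,
`C̃² (t/s)^{δ-1} ≤ 𝒦(t)/𝒦(s) ≤ C̃⁻¹ (t/s)`. -/
theorem stmt_9 (ψ Φ : ℝ → ℝ)
    (hψ_pos : ∀ r : ℝ, 0 < r → 0 < ψ r)
    (hψ_mono : ∀ r s : ℝ, 0 < r → r ≤ s → ψ r ≤ ψ s)
    (hψ_int : ∀ r : ℝ, 0 < r → IntegrableOn (fun s => s / ψ s) (Ioo 0 r))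
    (hΦ : ∀ r : ℝ, 0 < r → Φ r = r ^ 2 / (2 * ∫ s in Ioo (0:ℝ) r, s / ψ s))
    (a : ℝ≥0∞) (ha : 0 < a) (δ Cl : ℝ) (hδ : 1 < δ) (hCl : 0 < Cl) (hCl1 : Cl ≤ 1)
    (hL : ∀ r R : ℝ, 0 < r → r ≤ R → ENNReal.ofReal R < a →
      Cl * (R / r) ^ δ ≤ Φ R / Φ r) :
    (∀ t : ℝ, 0 < t → ENNReal.ofReal t < a →
      Φ t / t ≤ scaleK Φ t ∧ scaleK Φ t ≤ Cl⁻¹ * (Φ t / t)) ∧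
    (∀ s t : ℝ, 0 < s → s ≤ t → ENNReal.ofReal t < a →
      Cl ^ 2 * (t / s) ^ (δ - 1) ≤ scaleK Φ t / scaleK Φ s ∧
      scaleK Φ t / scaleK Φ s ≤ Cl⁻¹ * (t / s)) :=
  stmt_9_general ψ Φ hψ_pos hψ_int hΦ a δ Cl hδ hCl hL
end

section
/- Let ψ:(0,∞)→(0,∞) be non-decreasing with ∫₀^r s/ψ(s) ds < ∞ for every r>0, let Φ(r) := r²/(2∫₀^r s/ψ(s) ds), let a∈(0,∞), and let Φ̃_a(s) := (Φ(a)/a²)·s² for 0<s<a and Φ̃_a(s) := Φ(s) for s≥a. Then: (1) Φ̃_a(t) ≤ Φ(t) for every t>0, and for every c>0 and every t≥c, Φ̃_a(t) ≥ min((c/a)²,1)·Φ(t); (2) for all 0<s<t, Φ̃_a(t)/Φ̃_a(s) ≤ (t/s)²; (3) if Φ satisfies L^a(δ,C̃) with δ≤2 and C̃∈(0,1], then Φ̃_a satisfies the global condition L(δ,C̃). -/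
open MeasureTheory Set

/-!
Both `Φ(r)/r² = 1/(2∫₀^r s/ψ(s) ds)` and, after substituting `s = ru`,
`Φ(r) = 1/(2∫₀¹ u/ψ(ru) du)` are monotone: the first is non-increasing, the second
non-decreasing. Then `Φ̃_a(r)/r² = min(Φ(a)/a², Φ(r)/r²)` is non-increasing as well, which gives
`Φ̃_a ≤ Φ` and the quadratic upper bound (2). For (3), the quadratic piece on `(0, a]` satisfies
`L(δ, 1)` because `δ ≤ 2`, and it glues at `a` with `L^a(δ, C̃)` on `[a, ∞)`.
-/

section Integral

variable {ψ : ℝ → ℝ}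

theorem intervalIntegral_div_pos (hψ_pos : ∀ r, 0 < r → 0 < ψ r) {r : ℝ} (hr : 0 < r)
    (hint : IntervalIntegrable (fun s => s / ψ s) volume 0 r) :
    0 < ∫ s in 0..r, s / ψ s :=
  intervalIntegral.intervalIntegral_pos_of_pos_on hint
    (fun s hs => div_pos hs.1 (hψ_pos s hs.1)) hr

theorem intervalIntegral_div_mono (hψ_pos : ∀ r, 0 < r → 0 < ψ r) {r R : ℝ} (hr : 0 ≤ r)
    (hrR : r ≤ R) (hint : IntervalIntegrable (fun s => s / ψ s) volume 0 R) :
    ∫ s in 0..r, s / ψ s ≤ ∫ s in 0..R, s / ψ s := by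
  refine intervalIntegral.integral_mono_interval le_rfl hr hrR ?_ hint
  filter_upwards [ae_restrict_mem measurableSet_Ioc] with s hs
  exact div_nonneg hs.1.le (hψ_pos s hs.1).le

theorem intervalIntegral_div_eq_sq_mul (ψ : ℝ → ℝ) {r : ℝ} (hr : r ≠ 0) :
    ∫ s in 0..r, s / ψ s = r ^ 2 * ∫ u in 0..1, u / ψ (r * u) := by
  have hscale := intervalIntegral.integral_comp_mul_left (a := 0) (b := 1) (fun s => s / ψ s) hr
  simp only [mul_zero, mul_one, smul_eq_mul, mul_div_assoc,
    intervalIntegral.integral_const_mul] at hscale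
  field_simp at hscale ⊢
  linear_combination -hscale

theorem intervalIntegrable_div_comp_mul {r : ℝ} (hr : r ≠ 0)
    (hint : IntervalIntegrable (fun s => s / ψ s) volume 0 r) :
    IntervalIntegrable (fun u => u / ψ (r * u)) volume 0 1 := by
  have h := (hint.comp_mul_left (c := r)).const_mul r⁻¹
  rw [zero_div, div_self hr] at h
  convert h using 2 with u
  field_simp

theorem antitoneOn_integral_div_comp_mul (hψ_pos : ∀ r, 0 < r → 0 < ψ r)
    (hψ_mono : MonotoneOn ψ (Ioi 0))
    (hint : ∀ r, 0 < r → IntervalIntegrable (fun s => s / ψ s) volume 0 r) :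
    AntitoneOn (fun r => ∫ u in 0..1, u / ψ (r * u)) (Ioi 0) := by
  intro r (hr : 0 < r) R (hR : 0 < R) hrR
  refine intervalIntegral.integral_mono_on zero_le_one
    (intervalIntegrable_div_comp_mul hR.ne' (hint R hR))
    (intervalIntegrable_div_comp_mul hr.ne' (hint r hr)) fun u hu => ?_
  rcases hu.1.eq_or_lt with rfl | hu₀
  · simp
  · exact div_le_div_of_nonneg_left hu.1 (hψ_pos _ (mul_pos hr hu₀))
      (hψ_mono (mul_pos hr hu₀) (mul_pos hR hu₀) (by gcongr))

end Integral

section Phi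

variable {ψ Φ : ℝ → ℝ}

theorem pos_of_eq_sq_div_integral (hψ_pos : ∀ r, 0 < r → 0 < ψ r)
    (hint : ∀ r, 0 < r → IntervalIntegrable (fun s => s / ψ s) volume 0 r)
    (hΦ : ∀ r, 0 < r → Φ r = r ^ 2 / (2 * ∫ s in 0..r, s / ψ s)) {r : ℝ} (hr : 0 < r) :
    0 < Φ r := by
  have := intervalIntegral_div_pos hψ_pos hr (hint r hr)
  rw [hΦ r hr]
  positivity

theorem antitoneOn_div_sq_of_eq_sq_div_integral (hψ_pos : ∀ r, 0 < r → 0 < ψ r)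
    (hint : ∀ r, 0 < r → IntervalIntegrable (fun s => s / ψ s) volume 0 r)
    (hΦ : ∀ r, 0 < r → Φ r = r ^ 2 / (2 * ∫ s in 0..r, s / ψ s)) :
    AntitoneOn (fun r => Φ r / r ^ 2) (Ioi 0) := by
  intro r (hr : 0 < r) R (hR : 0 < R) hrR
  have hI := intervalIntegral_div_pos hψ_pos hr (hint r hr)
  have hmono := intervalIntegral_div_mono hψ_pos hr.le hrR (hint R hR)
  simp only [hΦ r hr, hΦ R hR]
  rw [div_div_cancel_left' (by positivity), div_div_cancel_left' (by positivity)]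
  gcongr

theorem monotoneOn_of_eq_sq_div_integral (hψ_pos : ∀ r, 0 < r → 0 < ψ r)
    (hψ_mono : MonotoneOn ψ (Ioi 0))
    (hint : ∀ r, 0 < r → IntervalIntegrable (fun s => s / ψ s) volume 0 r)
    (hΦ : ∀ r, 0 < r → Φ r = r ^ 2 / (2 * ∫ s in 0..r, s / ψ s)) :
    MonotoneOn Φ (Ioi 0) := by
  have hΦ_eq : ∀ r, 0 < r → Φ r = (2 * ∫ u in 0..1, u / ψ (r * u))⁻¹ := fun r hr => by
    rw [hΦ r hr, intervalIntegral_div_eq_sq_mul ψ hr.ne']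
    field_simp
  intro r (hr : 0 < r) R (hR : 0 < R) hrR
  have hJ : 0 < ∫ u in 0..1, u / ψ (R * u) := by
    have := intervalIntegral_div_pos hψ_pos hR (hint R hR)
    rw [intervalIntegral_div_eq_sq_mul ψ hR.ne'] at this
    exact pos_of_mul_pos_right this (by positivity)
  rw [hΦ_eq r hr, hΦ_eq R hR]
  gcongr
  exact antitoneOn_integral_div_comp_mul hψ_pos hψ_mono hint hr hR hrR

end Phi

section Extension

variable {Φ Φt : ℝ → ℝ} {a : ℝ}

theorem div_sq_eq_min_of_extend (ha : 0 < a) (hanti : AntitoneOn (fun r => Φ r / r ^ 2) (Ioi 0))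
    (hΦt₁ : ∀ s, 0 < s → s < a → Φt s = Φ a / a ^ 2 * s ^ 2) (hΦt₂ : ∀ s, a ≤ s → Φt s = Φ s)
    {r : ℝ} (hr : 0 < r) :
    Φt r / r ^ 2 = min (Φ a / a ^ 2) (Φ r / r ^ 2) := by
  rcases lt_or_ge r a with hra | har
  · rw [hΦt₁ r hr hra, mul_div_cancel_right₀ _ (by positivity),
      min_eq_left (hanti hr ha hra.le)]
  · rw [hΦt₂ r har, min_eq_right (hanti ha hr har)]

theorem antitoneOn_extend_div_sq (ha : 0 < a)
    (hanti : AntitoneOn (fun r => Φ r / r ^ 2) (Ioi 0))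
    (hΦt₁ : ∀ s, 0 < s → s < a → Φt s = Φ a / a ^ 2 * s ^ 2) (hΦt₂ : ∀ s, a ≤ s → Φt s = Φ s) :
    AntitoneOn (fun r => Φt r / r ^ 2) (Ioi 0) :=
  (antitoneOn_const.min hanti).congr fun _ hr =>
    (div_sq_eq_min_of_extend ha hanti hΦt₁ hΦt₂ hr).symm

theorem extend_pos (ha : 0 < a) (hpos : ∀ r, 0 < r → 0 < Φ r)
    (hanti : AntitoneOn (fun r => Φ r / r ^ 2) (Ioi 0))
    (hΦt₁ : ∀ s, 0 < s → s < a → Φt s = Φ a / a ^ 2 * s ^ 2) (hΦt₂ : ∀ s, a ≤ s → Φt s = Φ s)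
    {r : ℝ} (hr : 0 < r) :
    0 < Φt r := by
  have hmin : 0 < min (Φ a / a ^ 2) (Φ r / r ^ 2) :=
    lt_min (div_pos (hpos a ha) (by positivity)) (div_pos (hpos r hr) (by positivity))
  rw [← div_sq_eq_min_of_extend ha hanti hΦt₁ hΦt₂ hr] at hmin
  exact (div_pos_iff_of_pos_right (by positivity)).1 hmin

theorem extend_le (ha : 0 < a) (hanti : AntitoneOn (fun r => Φ r / r ^ 2) (Ioi 0))
    (hΦt₁ : ∀ s, 0 < s → s < a → Φt s = Φ a / a ^ 2 * s ^ 2) (hΦt₂ : ∀ s, a ≤ s → Φt s = Φ s)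
    {r : ℝ} (hr : 0 < r) :
    Φt r ≤ Φ r := by
  have h : Φt r / r ^ 2 ≤ Φ r / r ^ 2 :=
    (div_sq_eq_min_of_extend ha hanti hΦt₁ hΦt₂ hr).trans_le (min_le_right _ _)
  exact le_of_mul_le_mul_right (by simpa only [div_eq_mul_inv] using h) (by positivity)

theorem min_sq_div_mul_le_extend (ha : 0 < a) (hpos : ∀ r, 0 < r → 0 < Φ r)
    (hmono : MonotoneOn Φ (Ioi 0))
    (hΦt₁ : ∀ s, 0 < s → s < a → Φt s = Φ a / a ^ 2 * s ^ 2) (hΦt₂ : ∀ s, a ≤ s → Φt s = Φ s)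
    {c t : ℝ} (hc : 0 < c) (hct : c ≤ t) :
    min ((c / a) ^ 2) 1 * Φ t ≤ Φt t := by
  have ht : 0 < t := hc.trans_le hct
  rcases lt_or_ge t a with hta | hat
  · rw [hΦt₁ t ht hta]
    calc min ((c / a) ^ 2) 1 * Φ t ≤ (c / a) ^ 2 * Φ t := by
          gcongr
          · exact (hpos t ht).le
          · exact min_le_left _ _
      _ ≤ (t / a) ^ 2 * Φ a := by
          have hΦ_pos : 0 < Φ t := hpos t ht
          gcongr
          exact hmono ht ha hta.le
      _ = Φ a / a ^ 2 * t ^ 2 := by ring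
  · rw [hΦt₂ t hat]
    exact mul_le_of_le_one_left (hpos t ht).le (min_le_right _ _)

end Extension

theorem div_le_div_sq_of_antitoneOn {g : ℝ → ℝ} (hg : AntitoneOn (fun r => g r / r ^ 2) (Ioi 0))
    {s t : ℝ} (hs : 0 < s) (hst : s ≤ t) (hgs : 0 < g s) :
    g t / g s ≤ (t / s) ^ 2 := by
  have ht : 0 < t := hs.trans_le hst
  have h : g t / t ^ 2 ≤ g s / s ^ 2 := hg hs ht hst
  rw [div_le_div_iff₀ (by positivity) (by positivity)] at h
  rw [div_pow, div_le_div_iff₀ hgs (by positivity)]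
  linarith

/-- The scaling condition `L(β, c)` of the paper, restricted to radii in `S`. -/
def LowerScalingOn (g : ℝ → ℝ) (β c : ℝ) (S : Set ℝ) : Prop :=
  ∀ r ∈ S, ∀ R ∈ S, r ≤ R → c * (R / r) ^ β ≤ g R / g r

namespace LowerScalingOn

variable {g h : ℝ → ℝ} {β c : ℝ} {S T : Set ℝ}

theorem mono (hg : LowerScalingOn g β c S) (hTS : T ⊆ S) : LowerScalingOn g β c T :=
  fun r hr R hR hrR => hg r (hTS hr) R (hTS hR) hrR

theorem congr (hg : LowerScalingOn g β c S) (hgh : EqOn g h S) : LowerScalingOn h β c S :=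
  fun r hr R hR hrR => by simpa only [hgh hr, hgh hR] using hg r hr R hR hrR

/-- Gluing at `a`: for `r < a ≤ R` split `R / r = (R / a) (a / r)`; the constant `1` on the
lower piece is what keeps the constant `c` from degrading to `c²`. -/
theorem Ioi_of_Ioc_of_Ici {a : ℝ} (hga : g a ≠ 0) (hc₀ : 0 ≤ c) (hc₁ : c ≤ 1)
    (hlow : LowerScalingOn g β 1 (Ioc 0 a)) (hhigh : LowerScalingOn g β c (Ici a)) :
    LowerScalingOn g β c (Ioi 0) := by
  intro r (hr : 0 < r) R (hR : 0 < R) hrR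
  rcases le_or_gt a r with har | hra
  · exact hhigh r har R (har.trans hrR) hrR
  rcases le_or_gt R a with hRa | haR
  · calc c * (R / r) ^ β ≤ 1 * (R / r) ^ β := by gcongr
      _ ≤ g R / g r := hlow r ⟨hr, hra.le⟩ R ⟨hR, hRa⟩ hrR
  · have ha : 0 < a := hr.trans hra
    have hupper := hhigh a (le_refl a) R haR.le haR.le
    calc c * (R / r) ^ β = c * (R / a) ^ β * (1 * (a / r) ^ β) := by
          rw [one_mul, mul_assoc, ← Real.mul_rpow (by positivity) (by positivity),
            div_mul_div_cancel₀ ha.ne']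
      _ ≤ g R / g a * (g a / g r) :=
          mul_le_mul hupper (hlow r ⟨hr, hra.le⟩ a ⟨ha, le_rfl⟩ hra.le) (by positivity)
            (le_trans (by positivity) hupper)
      _ = g R / g r := div_mul_div_cancel₀ hga

end LowerScalingOn

theorem lowerScalingOn_const_mul_sq {k β : ℝ} (hk : k ≠ 0) (hβ : β ≤ 2) :
    LowerScalingOn (fun r => k * r ^ 2) β 1 (Ioi 0) := by
  intro r (hr : 0 < r) R _ hrR
  rw [one_mul, mul_div_mul_left _ _ hk, ← div_pow, ← Real.rpow_two]
  exact Real.rpow_le_rpow_of_exponent_le ((one_le_div hr).2 hrR) hβ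

theorem lowerScalingOn_extend {Φ Φt : ℝ → ℝ} {a δ c : ℝ} (ha : 0 < a) (hΦa : 0 < Φ a)
    (hΦt₁ : ∀ s, 0 < s → s < a → Φt s = Φ a / a ^ 2 * s ^ 2) (hΦt₂ : ∀ s, a ≤ s → Φt s = Φ s)
    (hδ : δ ≤ 2) (hc₀ : 0 ≤ c) (hc₁ : c ≤ 1) (hΦ : LowerScalingOn Φ δ c (Ici a)) :
    LowerScalingOn Φt δ c (Ioi 0) := by
  have hquad : EqOn (fun r => Φ a / a ^ 2 * r ^ 2) Φt (Ioc 0 a) := fun r ⟨hr, hra⟩ => by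
    rcases hra.lt_or_eq with hra | rfl
    · exact (hΦt₁ r hr hra).symm
    · rw [hΦt₂ r le_rfl]
      field_simp
  have hΦta : Φt a ≠ 0 := by
    rw [hΦt₂ a le_rfl]
    exact hΦa.ne'
  refine LowerScalingOn.Ioi_of_Ioc_of_Ici hΦta hc₀ hc₁ ?_ ?_
  · exact ((lowerScalingOn_const_mul_sq (by positivity) hδ).mono Ioc_subset_Ioi_self).congr hquad
  · exact hΦ.congr fun r hr => (hΦt₂ r hr).symm

/-- With `Φ(r) = r²/(2∫₀^r s/ψ(s) ds)`, `a ∈ (0,∞)` and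
`Φ̃_a(s) = (Φ(a)/a²) s²` for `0 < s < a`, `Φ̃_a(s) = Φ(s)` for `s ≥ a`:
(1) `Φ̃_a(t) ≤ Φ(t)` for all `t > 0`, and `Φ̃_a(t) ≥ min((c/a)², 1) Φ(t)` for `t ≥ c > 0`;
(2) `Φ̃_a(t)/Φ̃_a(s) ≤ (t/s)²` for `0 < s < t`;
(3) if `Φ` satisfies `L^a(δ, C̃)` with `δ ≤ 2`, then `Φ̃_a` satisfies the global
condition `L(δ, C̃)`. -/
theorem stmt_10 (ψ Φ Φt : ℝ → ℝ)
    (hψ_pos : ∀ r : ℝ, 0 < r → 0 < ψ r)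
    (hψ_mono : ∀ r s : ℝ, 0 < r → r ≤ s → ψ r ≤ ψ s)
    (hψ_int : ∀ r : ℝ, 0 < r → IntegrableOn (fun s => s / ψ s) (Ioo 0 r))
    (hΦ : ∀ r : ℝ, 0 < r → Φ r = r ^ 2 / (2 * ∫ s in Ioo (0:ℝ) r, s / ψ s))
    (a : ℝ) (ha : 0 < a)
    (hΦt₁ : ∀ s : ℝ, 0 < s → s < a → Φt s = Φ a / a ^ 2 * s ^ 2)
    (hΦt₂ : ∀ s : ℝ, a ≤ s → Φt s = Φ s) :
    ((∀ t : ℝ, 0 < t → Φt t ≤ Φ t) ∧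
      (∀ c t : ℝ, 0 < c → c ≤ t → min ((c / a) ^ 2) 1 * Φ t ≤ Φt t)) ∧
    (∀ s t : ℝ, 0 < s → s < t → Φt t / Φt s ≤ (t / s) ^ 2) ∧
    (∀ δ Cl : ℝ, 0 < δ → δ ≤ 2 → 0 < Cl → Cl ≤ 1 →
      (∀ r R : ℝ, a ≤ r → r ≤ R → Cl * (R / r) ^ δ ≤ Φ R / Φ r) →
      ∀ r R : ℝ, 0 < r → r ≤ R → Cl * (R / r) ^ δ ≤ Φt R / Φt r) := by
  have hint : ∀ r, 0 < r → IntervalIntegrable (fun s => s / ψ s) volume 0 r := fun r hr =>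
    (intervalIntegrable_iff_integrableOn_Ioo_of_le hr.le).2 (hψ_int r hr)
  have hΦ' : ∀ r, 0 < r → Φ r = r ^ 2 / (2 * ∫ s in 0..r, s / ψ s) := fun r hr => by
    rw [hΦ r hr, intervalIntegral.integral_of_le hr.le, integral_Ioc_eq_integral_Ioo]
  have hpos := fun r => pos_of_eq_sq_div_integral (r := r) hψ_pos hint hΦ'
  have hanti := antitoneOn_div_sq_of_eq_sq_div_integral hψ_pos hint hΦ'
  have hmono := monotoneOn_of_eq_sq_div_integral hψ_pos (fun r hr s _ hrs => hψ_mono r s hr hrs)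
    hint hΦ'
  refine ⟨⟨fun t ht => extend_le ha hanti hΦt₁ hΦt₂ ht,
    fun c t hc hct => min_sq_div_mul_le_extend ha hpos hmono hΦt₁ hΦt₂ hc hct⟩,
    fun s t hs hst => ?_, fun δ Cl _ hδ hCl hCl₁ hL r R hr hrR => ?_⟩
  · exact div_le_div_sq_of_antitoneOn (antitoneOn_extend_div_sq ha hanti hΦt₁ hΦt₂) hs hst.le
      (extend_pos ha hpos hanti hΦt₁ hΦt₂ hs)
  · exact lowerScalingOn_extend ha (hpos a ha) hΦt₁ hΦt₂ hδ hCl.le hCl₁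
      (fun r hr R _ hrR => hL r R hr hrR) r hr R (hr.trans_le hrR) hrR
end

section
/- Let ψ:(0,∞)→(0,∞) be non-decreasing with ∫₀^r s/ψ(s) ds < ∞ for every r>0, let Φ(r) := r²/(2∫₀^r s/ψ(s) ds), let a∈(0,∞), Φ̃_a(s) := (Φ(a)/a²)·s² for 0<s<a and Φ̃_a(s) := Φ(s) for s≥a, and 𝒦_{∞,a}(s) := sup_{0<b≤s} Φ̃_a(b)/b. Suppose Φ satisfies L^a(δ,C̃) with δ>1 and C̃∈(0,1]. Then: (i) Φ̃_a(t)/t ≤ 𝒦_{∞,a}(t) ≤ C̃⁻¹·Φ̃_a(t)/t for every t>0; (ii) C̃²(t/s)^{δ−1} ≤ 𝒦_{∞,a}(t)/𝒦_{∞,a}(s) ≤ C̃⁻¹·(t/s) for all 0<s<t; (iii) for every c₁>0 there exists c₂≥1, depending only on c₁, a, δ, C̃, such that c₂⁻¹·sup_{c₁≤b≤t} Φ(b)/b ≤ 𝒦_{∞,a}(t) ≤ c₂·sup_{c₁≤b≤t} Φ(b)/b for every t≥c₁. -/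
open MeasureTheory Set

/-- `𝒦_{∞,a}(s) := sup_{0 < b ≤ s} Φ̃_a(b)/b`, given `Φ̃_a`. -/
noncomputable def scaleKinf (Φt : ℝ → ℝ) (s : ℝ) : ℝ :=
  sSup ((fun b => Φt b / b) '' Set.Ioc 0 s)

set_option maxHeartbeats 2000000 in
/-- With `Φ(r) = r²/(2∫₀^r s/ψ(s) ds)`, `a ∈ (0,∞)`,
`Φ̃_a(s) = (Φ(a)/a²)s²` for `0 < s < a`, `Φ̃_a(s) = Φ(s)` for `s ≥ a`, and
`𝒦_{∞,a}(s) = sup_{0 < b ≤ s} Φ̃_a(b)/b`: if `Φ` satisfies `L^a(δ, C̃)` with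
`δ > 1`, `C̃ ∈ (0,1]`, then
(i) `Φ̃_a(t)/t ≤ 𝒦_{∞,a}(t) ≤ C̃⁻¹ Φ̃_a(t)/t` for all `t > 0`;
(ii) `C̃²(t/s)^{δ-1} ≤ 𝒦_{∞,a}(t)/𝒦_{∞,a}(s) ≤ C̃⁻¹ (t/s)` for `0 < s < t`;
(iii) for every `c₁ > 0` there is `c₂ ≥ 1` with
`c₂⁻¹ sup_{c₁ ≤ b ≤ t} Φ(b)/b ≤ 𝒦_{∞,a}(t) ≤ c₂ sup_{c₁ ≤ b ≤ t} Φ(b)/b` for `t ≥ c₁`. -/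
theorem stmt_11 (ψ Φ Φt : ℝ → ℝ)
    (hψ_pos : ∀ r : ℝ, 0 < r → 0 < ψ r)
    (hψ_mono : ∀ r s : ℝ, 0 < r → r ≤ s → ψ r ≤ ψ s)
    (hψ_int : ∀ r : ℝ, 0 < r → IntegrableOn (fun s => s / ψ s) (Ioo 0 r))
    (hΦ : ∀ r : ℝ, 0 < r → Φ r = r ^ 2 / (2 * ∫ s in Ioo (0:ℝ) r, s / ψ s))
    (a : ℝ) (ha : 0 < a)
    (hΦt₁ : ∀ s : ℝ, 0 < s → s < a → Φt s = Φ a / a ^ 2 * s ^ 2)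
    (hΦt₂ : ∀ s : ℝ, a ≤ s → Φt s = Φ s)
    (δ Cl : ℝ) (hδ : 1 < δ) (hCl : 0 < Cl) (hCl1 : Cl ≤ 1)
    (hL : ∀ r R : ℝ, a ≤ r → r ≤ R → Cl * (R / r) ^ δ ≤ Φ R / Φ r) :
    (∀ t : ℝ, 0 < t →
      Φt t / t ≤ scaleKinf Φt t ∧ scaleKinf Φt t ≤ Cl⁻¹ * (Φt t / t)) ∧
    (∀ s t : ℝ, 0 < s → s < t →
      Cl ^ 2 * (t / s) ^ (δ - 1) ≤ scaleKinf Φt t / scaleKinf Φt s ∧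
      scaleKinf Φt t / scaleKinf Φt s ≤ Cl⁻¹ * (t / s)) ∧
    (∀ c₁ : ℝ, 0 < c₁ → ∃ c₂ : ℝ, 1 ≤ c₂ ∧ ∀ t : ℝ, c₁ ≤ t →
      c₂⁻¹ * sSup ((fun b => Φ b / b) '' Set.Icc c₁ t) ≤ scaleKinf Φt t ∧
      scaleKinf Φt t ≤ c₂ * sSup ((fun b => Φ b / b) '' Set.Icc c₁ t)) := by
  -- integral facts
  have hnn : ∀ r : ℝ, 0 < r → 0 ≤ᶠ[ae (volume.restrict (Ioo 0 r))] (fun s => s / ψ s) := by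
    intro r hr
    rw [Filter.EventuallyLE, ae_restrict_iff' measurableSet_Ioo]
    filter_upwards with x hx
    exact le_of_lt (div_pos hx.1 (hψ_pos x hx.1))
  have hIpos : ∀ r : ℝ, 0 < r → 0 < ∫ s in Ioo (0:ℝ) r, s / ψ s := by
    intro r hr
    rw [setIntegral_pos_iff_support_of_nonneg_ae (hnn r hr) (hψ_int r hr)]
    refine lt_of_lt_of_le ?_ (measure_mono (fun x hx => ⟨?_, hx⟩))
    · simp [Real.volume_Ioo, hr]
    · exact ne_of_gt (div_pos hx.1 (hψ_pos x hx.1))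
  have hImono : ∀ r R : ℝ, 0 < r → r ≤ R →
      (∫ s in Ioo (0:ℝ) r, s / ψ s) ≤ ∫ s in Ioo (0:ℝ) R, s / ψ s := by
    intro r R hr hrR
    exact setIntegral_mono_set (hψ_int R (lt_of_lt_of_le hr hrR)) (hnn R (lt_of_lt_of_le hr hrR))
      (HasSubset.Subset.eventuallyLE (Ioo_subset_Ioo le_rfl hrR))
  have hΦpos : ∀ r : ℝ, 0 < r → 0 < Φ r := by
    intro r hr
    rw [hΦ r hr]
    exact div_pos (pow_pos hr 2) (by linarith [hIpos r hr])
  have hΦsq : ∀ r R : ℝ, 0 < r → r ≤ R → Φ R ≤ (R/r)^2 * Φ r := by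
    intro r R hr hrR
    have hR : 0 < R := lt_of_lt_of_le hr hrR
    have hIr := hIpos r hr
    have hIR := hIpos R hR
    rw [hΦ r hr, hΦ R hR]
    have e : (R/r)^2 * (r^2/(2*∫ s in Ioo (0:ℝ) r, s / ψ s))
        = R^2/(2*∫ s in Ioo (0:ℝ) r, s / ψ s) := by
      field_simp
    rw [e]
    apply div_le_div_of_nonneg_left (sq_nonneg R) (by linarith) (by linarith [hImono r R hr hrR])
  have hΦa : 0 < Φ a := hΦpos a ha
  -- δ ≤ 2
  have hδ2 : δ ≤ 2 := by
    by_contra hcon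
    push_neg at hcon
    have hq0 : (0:ℝ) < 2/Cl := by positivity
    set q : ℝ := (2/Cl) ^ (δ-2)⁻¹ with hq
    have hq1 : 1 < q := by
      rw [hq]
      refine (Real.one_lt_rpow_iff_of_pos hq0).mpr (Or.inl ⟨?_, by simp; linarith⟩)
      rw [lt_div_iff₀ hCl]; linarith
    have hqpos : 0 < q := lt_trans one_pos hq1
    have haR : a ≤ a * q := le_mul_of_one_le_right ha.le hq1.le
    have h1 := hL a (a*q) le_rfl haR
    have h2 := hΦsq a (a*q) ha haR
    have hqa : (a*q)/a = q := by field_simp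
    rw [hqa] at h1 h2
    have h3 : Φ (a*q) / Φ a ≤ q^2 := by
      rw [div_le_iff₀ hΦa]; linarith [h2]
    have h4 : Cl * q^δ ≤ q^(2:ℕ) := le_trans h1 h3
    have h6 : q^(δ-2) = 2/Cl := by
      rw [hq]; exact Real.rpow_inv_rpow hq0.le (by linarith)
    have h7 : q ^ (2:ℝ) = q ^ (2:ℕ) := by
      rw [← Real.rpow_natCast q 2]; norm_num
    have key : Cl * q ^ δ = 2 * q^(2:ℕ) := by
      have h5 : q ^ δ = q^(2:ℝ) * q^(δ-2) := by
        rw [← Real.rpow_add hqpos]; ring_nf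
      rw [h5, h6, h7]
      field_simp
    rw [key] at h4
    nlinarith [pow_pos hqpos 2]
  -- basic facts about Φt
  have hFeq₁ : ∀ s : ℝ, 0 < s → s < a → Φt s / s = Φ a / a^2 * s := by
    intro s hs hsa
    rw [hΦt₁ s hs hsa]
    field_simp
  have hKnum : 0 < Φ a / a^2 := div_pos hΦa (pow_pos ha 2)
  have hfpos : ∀ s : ℝ, 0 < s → 0 < Φt s / s := by
    intro s hs
    rcases lt_or_ge s a with h | h
    · rw [hFeq₁ s hs h]; positivity
    · rw [hΦt₂ s h]; exact div_pos (hΦpos s hs) hs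
  have hrpow_le : ∀ x : ℝ, 1 ≤ x → x ^ (δ-1) ≤ x := by
    intro x hx
    have h := Real.rpow_le_rpow_of_exponent_le hx (show δ-1 ≤ 1 by linarith)
    rwa [Real.rpow_one] at h
  have hrpow_ge1 : ∀ x : ℝ, 1 ≤ x → 1 ≤ x ^ (δ-1) := by
    intro x hx
    have h := Real.rpow_le_rpow_of_exponent_le hx (show (0:ℝ) ≤ δ-1 by linarith)
    rwa [Real.rpow_zero] at h
  -- key scaling lemma L1
  have hL1 : ∀ s t : ℝ, 0 < s → s ≤ t → Cl * (t/s)^(δ-1) * (Φt s/s) ≤ Φt t/t := by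
    intro s t hs hst
    have ht : 0 < t := lt_of_lt_of_le hs hst
    have hts1 : 1 ≤ t/s := (one_le_div hs).mpr hst
    have htsp : (0:ℝ) < t/s := div_pos ht hs
    rcases lt_or_ge t a with hta | hat
    · rw [hFeq₁ s hs (lt_of_le_of_lt hst hta), hFeq₁ t ht hta]
      have h1 : (t/s)^(δ-1) ≤ t/s := hrpow_le _ hts1
      have h2 : Cl * (t/s)^(δ-1) ≤ t/s := by
        nlinarith [Real.rpow_pos_of_pos htsp (δ-1)]
      calc Cl*(t/s)^(δ-1)*(Φ a/a^2*s) ≤ (t/s)*(Φ a/a^2*s) :=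
            mul_le_mul_of_nonneg_right h2 (by positivity)
        _ = Φ a/a^2*t := by field_simp
    · rcases lt_or_ge s a with hsa | has
      · -- s < a ≤ t
        rw [hFeq₁ s hs hsa, hΦt₂ t hat]
        have h1 := hL a t le_rfl hat
        have h2 : Cl * (t/a)^δ * Φ a ≤ Φ t := (le_div_iff₀ hΦa).mp h1
        have has1 : 1 ≤ a/s := (one_le_div hs).mpr hsa.le
        have e1 : ((t/s:ℝ))^(δ-1) = (t/a)^(δ-1) * (a/s)^(δ-1) := by
          rw [← Real.mul_rpow (by positivity) (by positivity)]
          congr 1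
          field_simp
        have e2 : ((t/a:ℝ))^δ = (t/a)^(δ-1) * (t/a) := by
          have h := Real.rpow_add (show (0:ℝ) < t/a by positivity) (δ-1) 1
          rw [Real.rpow_one, show δ-1+1 = δ by ring] at h
          exact h
        have h3 : ((a/s:ℝ))^(δ-1) ≤ a/s := hrpow_le _ has1
        have hP : (0:ℝ) < (t/a)^(δ-1) := Real.rpow_pos_of_pos (by positivity) _
        rw [le_div_iff₀ ht]
        refine le_trans ?_ h2
        rw [e1, e2]
        have h0 : (0:ℝ) ≤ Cl*((t/a)^(δ-1)) * (Φ a/a^2*s)*t := by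
          have := hΦa
          apply mul_nonneg (mul_nonneg (mul_nonneg hCl.le hP.le) _) ht.le
          exact mul_nonneg (div_nonneg hΦa.le (by positivity)) hs.le
        have h4 : Cl * ((t/a)^(δ-1)*(a/s)) * (Φ a/a^2*s)*t = Cl*((t/a)^(δ-1)*(t/a))*Φ a := by
          field_simp
        nlinarith [mul_le_mul_of_nonneg_left h3 h0]
      · -- a ≤ s ≤ t
        rw [hΦt₂ s has, hΦt₂ t (le_trans has hst)]
        have hΦs := hΦpos s hs
        have h2 : Cl * (t/s)^δ * Φ s ≤ Φ t := (le_div_iff₀ hΦs).mp (hL s t has hst)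
        rw [le_div_iff₀ ht]
        refine le_trans (le_of_eq ?_) h2
        have e2 : ((t/s:ℝ))^δ = (t/s)^(δ-1) * (t/s) := by
          have h := Real.rpow_add htsp (δ-1) 1
          rw [Real.rpow_one, show δ-1+1 = δ by ring] at h
          exact h
        rw [e2]
        field_simp
  -- key scaling lemma L2
  have hL2 : ∀ s t : ℝ, 0 < s → s ≤ t → Φt t/t ≤ (t/s) * (Φt s/s) := by
    intro s t hs hst
    have ht : 0 < t := lt_of_lt_of_le hs hst
    rcases lt_or_ge t a with hta | hat
    · rw [hFeq₁ s hs (lt_of_le_of_lt hst hta), hFeq₁ t ht hta]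
      refine le_of_eq ?_
      field_simp
    · rcases lt_or_ge s a with hsa | has
      · rw [hFeq₁ s hs hsa, hΦt₂ t hat]
        rw [div_le_iff₀ ht]
        refine le_trans (hΦsq a t ha hat) (le_of_eq ?_)
        field_simp
      · rw [hΦt₂ s has, hΦt₂ t (le_trans has hst)]
        rw [div_le_iff₀ ht]
        refine le_trans (hΦsq s t hs hst) (le_of_eq ?_)
        field_simp
  -- sup machinery
  have hmem : ∀ t : ℝ, 0 < t → Φt t / t ∈ (fun b => Φt b / b) '' Ioc 0 t :=
    fun t ht => ⟨t, ⟨ht, le_rfl⟩, rfl⟩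
  have hub : ∀ t : ℝ, 0 < t → ∀ x ∈ (fun b => Φt b / b) '' Ioc 0 t, x ≤ Cl⁻¹ * (Φt t / t) := by
    rintro t ht x ⟨b, ⟨hb0, hbt⟩, rfl⟩
    have h1 := hL1 b t hb0 hbt
    have h2 : 1 ≤ (t/b)^(δ-1) := hrpow_ge1 _ ((one_le_div hb0).mpr hbt)
    rw [le_inv_mul_iff₀ hCl]
    nlinarith [hfpos b hb0, mul_nonneg (mul_nonneg hCl.le (hfpos b hb0).le) (sub_nonneg.mpr h2)]
  have hbdd : ∀ t : ℝ, 0 < t → BddAbove ((fun b => Φt b / b) '' Ioc 0 t) :=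
    fun t ht => ⟨_, fun x hx => hub t ht x hx⟩
  have hKge : ∀ b t : ℝ, 0 < b → b ≤ t → Φt b / b ≤ scaleKinf Φt t := by
    intro b t hb hbt
    exact le_csSup (hbdd t (lt_of_lt_of_le hb hbt)) ⟨b, ⟨hb, hbt⟩, rfl⟩
  have hKle : ∀ t : ℝ, 0 < t → scaleKinf Φt t ≤ Cl⁻¹ * (Φt t / t) :=
    fun t ht => csSup_le ⟨_, hmem t ht⟩ (fun x hx => hub t ht x hx)
  have hKpos : ∀ t : ℝ, 0 < t → 0 < scaleKinf Φt t :=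
    fun t ht => lt_of_lt_of_le (hfpos t ht) (hKge t t ht le_rfl)
  refine ⟨fun t ht => ⟨hKge t t ht le_rfl, hKle t ht⟩, ?_, ?_⟩
  · -- part (ii)
    intro s t hs hst
    have ht : 0 < t := lt_trans hs hst
    have hKs := hKpos s hs
    have hX : (0:ℝ) < (t/s)^(δ-1) := Real.rpow_pos_of_pos (div_pos ht hs) _
    constructor
    · rw [le_div_iff₀ hKs]
      calc Cl^2*(t/s)^(δ-1) * scaleKinf Φt s
          ≤ Cl^2*(t/s)^(δ-1) * (Cl⁻¹ * (Φt s/s)) :=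
            mul_le_mul_of_nonneg_left (hKle s hs) (by positivity)
        _ = Cl*(t/s)^(δ-1)*(Φt s/s) := by field_simp
        _ ≤ Φt t/t := hL1 s t hs hst.le
        _ ≤ scaleKinf Φt t := hKge t t ht le_rfl
    · rw [div_le_iff₀ hKs]
      calc scaleKinf Φt t ≤ Cl⁻¹ * (Φt t/t) := hKle t ht
        _ ≤ Cl⁻¹ * ((t/s)*(Φt s/s)) :=
            mul_le_mul_of_nonneg_left (hL2 s t hs hst.le) (by positivity)
        _ ≤ Cl⁻¹ * ((t/s)*scaleKinf Φt s) := by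
            refine mul_le_mul_of_nonneg_left ?_ (by positivity)
            exact mul_le_mul_of_nonneg_left (hKge s s hs le_rfl) (by positivity)
        _ = Cl⁻¹ * (t/s) * scaleKinf Φt s := by ring
  · -- part (iii)
    intro c₁ hc₁
    have hga : ∀ b : ℝ, 0 < b → Φ b / b = b / (2 * ∫ s in Ioo (0:ℝ) b, s / ψ s) := by
      intro b hb
      rw [hΦ b hb]
      rw [div_div, sq]
      rw [mul_comm (2 * ∫ s in Ioo (0:ℝ) b, s / ψ s) b, ← div_div]
      rw [mul_div_assoc, div_self hb.ne', mul_one]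
    have hIc₁ := hIpos c₁ hc₁
    have hIa := hIpos a ha
    set m : ℝ := c₁ / (2 * ∫ s in Ioo (0:ℝ) a, s / ψ s) with hmdef
    set M : ℝ := a / (2 * ∫ s in Ioo (0:ℝ) c₁, s / ψ s) with hMdef
    have hm : 0 < m := by rw [hmdef]; positivity
    have hM : 0 < M := by rw [hMdef]; positivity
    have hgbound : ∀ b : ℝ, c₁ ≤ b → b ≤ a → m ≤ Φ b / b ∧ Φ b / b ≤ M := by
      intro b h1 h2
      have hb : 0 < b := lt_of_lt_of_le hc₁ h1
      have hIb := hIpos b hb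
      rw [hga b hb]
      constructor
      · exact div_le_div₀ hb.le h1 (by positivity) (by linarith [hImono b a hb h2])
      · exact div_le_div₀ ha.le h2 (by positivity) (by linarith [hImono c₁ b hc₁ h1])
    set c₂ : ℝ := ((1 ⊔ Cl⁻¹) ⊔ (Cl⁻¹ * (Φ a/a) / m)) ⊔ (M / (Φ a/a^2*c₁)) with hc₂def
    have hc₂a : (1:ℝ) ≤ c₂ := le_trans (le_trans (le_max_left _ _) (le_max_left _ _)) (le_max_left _ _)
    have hc₂b : Cl⁻¹ ≤ c₂ := le_trans (le_trans (le_max_right _ _) (le_max_left _ _)) (le_max_left _ _)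
    have hc₂c : Cl⁻¹ * (Φ a/a) / m ≤ c₂ := le_trans (le_max_right _ _) (le_max_left _ _)
    have hc₂d : M / (Φ a/a^2*c₁) ≤ c₂ := le_max_right _ _
    have hc₂pos : (0:ℝ) < c₂ := lt_of_lt_of_le one_pos hc₂a
    refine ⟨c₂, hc₂a, ?_⟩
    intro t hct
    have ht : 0 < t := lt_of_lt_of_le hc₁ hct
    have hSne : ((fun b => Φ b / b) '' Icc c₁ t).Nonempty :=
      ⟨Φ c₁ / c₁, ⟨c₁, ⟨le_rfl, hct⟩, rfl⟩⟩
    have hSbdd : BddAbove ((fun b => Φ b / b) '' Icc c₁ t) := by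
      refine ⟨M ⊔ (Cl⁻¹ * (Φt t / t)), ?_⟩
      rintro x ⟨b, ⟨hb1, hb2⟩, rfl⟩
      rcases le_or_gt b a with hba | hab
      · exact le_max_of_le_left (hgbound b hb1 hba).2
      · refine le_max_of_le_right ?_
        have hb : 0 < b := lt_of_lt_of_le hc₁ hb1
        show Φ b / b ≤ _
        rw [← hΦt₂ b hab.le]
        exact hub t ht _ ⟨b, ⟨hb, hb2⟩, rfl⟩
    set S : ℝ := sSup ((fun b => Φ b / b) '' Icc c₁ t) with hSdef
    have hgS : ∀ b : ℝ, c₁ ≤ b → b ≤ t → Φ b / b ≤ S :=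
      fun b h1 h2 => le_csSup hSbdd ⟨b, ⟨h1, h2⟩, rfl⟩
    constructor
    · -- c₂⁻¹ * S ≤ 𝒦t
      rw [inv_mul_le_iff₀ hc₂pos]
      refine csSup_le hSne ?_
      rintro x ⟨b, ⟨hb1, hb2⟩, rfl⟩
      have hb : 0 < b := lt_of_lt_of_le hc₁ hb1
      rcases le_or_gt a b with hab | hba
      · show Φ b / b ≤ _
        rw [← hΦt₂ b hab]
        calc Φt b / b ≤ scaleKinf Φt t := hKge b t hb hb2
          _ ≤ c₂ * scaleKinf Φt t := le_mul_of_one_le_left (hKpos t ht).le hc₂a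
      · show Φ b / b ≤ _
        have h1 : Φ b / b ≤ M := (hgbound b hb1 hba.le).2
        have hc₁a : c₁ < a := lt_of_le_of_lt hb1 hba
        have h2 : Φ a/a^2*c₁ ≤ scaleKinf Φt t := by
          have h := hKge c₁ t hc₁ hct
          rwa [hFeq₁ c₁ hc₁ hc₁a] at h
        have hKc : 0 < Φ a/a^2*c₁ := mul_pos hKnum hc₁
        calc Φ b / b ≤ M := h1
          _ = (M/(Φ a/a^2*c₁))*(Φ a/a^2*c₁) := (div_mul_cancel₀ _ hKc.ne').symm
          _ ≤ c₂ * scaleKinf Φt t := mul_le_mul hc₂d h2 hKc.le (le_trans zero_le_one hc₂a)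
    · -- 𝒦t ≤ c₂ * S
      rcases le_or_gt a t with hat | hta
      · have gtS : Φ t/t ≤ S := hgS t hct le_rfl
        have hSpos : 0 < S := lt_of_lt_of_le (div_pos (hΦpos t ht) ht) gtS
        calc scaleKinf Φt t ≤ Cl⁻¹ * (Φt t/t) := hKle t ht
          _ = Cl⁻¹ * (Φ t/t) := by rw [hΦt₂ t hat]
          _ ≤ Cl⁻¹ * S := mul_le_mul_of_nonneg_left gtS (by positivity)
          _ ≤ c₂ * S := mul_le_mul_of_nonneg_right hc₂b hSpos.le
      · have hmS : m ≤ S := le_trans (hgbound t hct hta.le).1 (hgS t hct le_rfl)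
        calc scaleKinf Φt t ≤ Cl⁻¹ * (Φt t/t) := hKle t ht
          _ = Cl⁻¹ * (Φ a/a^2*t) := by rw [hFeq₁ t ht hta]
          _ ≤ Cl⁻¹ * (Φ a/a^2*a) := by
              refine mul_le_mul_of_nonneg_left ?_ (by positivity)
              exact mul_le_mul_of_nonneg_left hta.le hKnum.le
          _ = Cl⁻¹ * (Φ a/a) := by rw [sq]; field_simp
          _ = (Cl⁻¹ * (Φ a/a) / m) * m := (div_mul_cancel₀ _ hm.ne').symm
          _ ≤ c₂ * S := mul_le_mul hc₂c hmS hm.le hc₂pos.le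
end

section
/- Let r>0. Let g:(0,r]→ℝ be continuous and non-increasing, with s ↦ s·g(s) integrable on (0,r) and ∫₀^r s·g(s) ds ≥ 0. Let h:[0,r]→[0,∞) be measurable with h(0)=0, with h and h·|g| integrable on (0,r), and subadditive in the sense that h(s₁)+h(s₂) ≥ h(s₁+s₂) for all s₁,s₂>0 with s₁+s₂<r. Then ∫₀^r h(s)·g(s) ds ≥ 0. -/
/-!
Subadditivity gives `h t ≤ h s + h (t - s)`; integrating over `s ∈ (0, t)` yields
`t h(t) ≤ 2 H(t)` for `H(t) = ∫₀ᵗ h`. Hence the absolutely continuous function `H(t) / t²` has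
an a.e. nonpositive derivative and is antitone, i.e. `φ(s) = h(s) - c s` with `c = 2 H(r) / r²`
has a primitive `Φ ≥ 0` on `(0, r]` with `Φ(r) = 0`.

Since `g` is non-increasing, the superlevel sets `{g - g(r) > u}` are initial segments of
`(0, r)`, so by the layer-cake formula `∫ φ (g - g(r))` is an integral over `u > 0` of values
of `Φ`, hence nonnegative. Therefore `∫ h g = ∫ φ g + c ∫ s g ≥ g(r) Φ(r) + c ∫ s g ≥ 0`.
-/

open MeasureTheory Set

lemma mul_le_two_mul_setIntegral_of_le_add_sub {h : ℝ → ℝ} {t : ℝ} (ht : 0 ≤ t)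
    (hh : IntegrableOn h (Ioo 0 t)) (hsub : ∀ s ∈ Ioo 0 t, h t ≤ h s + h (t - s)) :
    t * h t ≤ 2 * ∫ s in Ioo 0 t, h s := by
  rw [← integral_Ioc_eq_integral_Ioo, ← intervalIntegral.integral_of_le ht]
  have hi : IntervalIntegrable h volume 0 t :=
    (intervalIntegrable_iff_integrableOn_Ioo_of_le ht).2 hh
  have hrefl : IntervalIntegrable (fun s => h (t - s)) volume 0 t := by
    simpa using (hi.comp_sub_left t).symm
  calc t * h t = ∫ _ in 0..t, h t := by simp
    _ ≤ ∫ s in 0..t, (h s + h (t - s)) :=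
        intervalIntegral.integral_mono_on_of_le_Ioo ht intervalIntegrable_const (hi.add hrefl) hsub
    _ = 2 * ∫ s in 0..t, h s := by
        rw [intervalIntegral.integral_add hi hrefl, intervalIntegral.integral_comp_sub_left,
          sub_self, sub_zero, two_mul]

lemma AbsolutelyContinuousOnInterval.le_of_ae_deriv_nonpos {f : ℝ → ℝ} {a b : ℝ} (hab : a ≤ b)
    (hf : AbsolutelyContinuousOnInterval f a b) (hf' : ∀ᵐ x, x ∈ Ioo a b → deriv f x ≤ 0) :
    f b ≤ f a := by
  rw [← sub_nonpos, ← hf.integral_deriv_eq_sub, intervalIntegral.integral_of_le hab,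
    integral_Ioc_eq_integral_Ioo]
  exact setIntegral_nonpos_ae measurableSet_Ioo hf'

theorem antitoneOn_setIntegral_div_sq {f : ℝ → ℝ} {r : ℝ} (hf : IntegrableOn f (Ioo 0 r))
    (hmul : ∀ t ∈ Ioo 0 r, t * f t ≤ 2 * ∫ s in Ioo 0 t, f s) :
    AntitoneOn (fun t => (∫ s in Ioo 0 t, f s) / t ^ 2) (Ioc 0 r) := by
  intro a ha b hb hab
  have hr : 0 ≤ r := ha.1.le.trans ha.2
  have hi : IntervalIntegrable f volume 0 r :=
    (intervalIntegrable_iff_integrableOn_Ioo_of_le hr).2 hf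
  have hP : ∀ t, 0 ≤ t → ∫ s in Ioo 0 t, f s = ∫ s in 0..t, f s := fun t ht => by
    rw [intervalIntegral.integral_of_le ht, integral_Ioc_eq_integral_Ioo]
  have hsub : uIcc a b ⊆ uIcc 0 r := by
    rw [uIcc_of_le hab, uIcc_of_le hr]; exact Icc_subset_Icc ha.1.le hb.2
  have hPac : AbsolutelyContinuousOnInterval (fun t => ∫ s in 0..t, f s) a b :=
    (hi.absolutelyContinuousOnInterval_intervalIntegral left_mem_uIcc).mono hsub
  have hsq : AbsolutelyContinuousOnInterval (fun t : ℝ => (t ^ 2)⁻¹) a b := by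
    refine ContDiffOn.absolutelyContinuousOnInterval ((contDiffOn_id.pow 2).inv fun t ht => ?_)
    rw [uIcc_of_le hab] at ht
    exact pow_ne_zero 2 (ha.1.trans_le ht.1).ne'
  simp only [hP a ha.1.le, hP b (ha.1.le.trans hab)]
  refine AbsolutelyContinuousOnInterval.le_of_ae_deriv_nonpos
    (f := fun t => (∫ s in 0..t, f s) / t ^ 2) hab
    (by simpa only [div_eq_mul_inv] using hPac.fun_mul hsq) ?_
  filter_upwards [hi.ae_hasDerivAt_integral] with t hderiv ht
  have ht0 : 0 < t := ha.1.trans ht.1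
  have htr : t ∈ Ioo 0 r := ⟨ht0, ht.2.trans_le hb.2⟩
  have hPt : HasDerivAt (fun t => ∫ s in 0..t, f s) (f t) t :=
    hderiv (by rw [uIcc_of_le hr]; exact Ioo_subset_Icc_self htr) 0 left_mem_uIcc
  have hQt : HasDerivAt (fun t => (∫ s in 0..t, f s) / t ^ 2)
      ((t * f t - 2 * ∫ s in 0..t, f s) / t ^ 3) t := by
    refine (hPt.div (hasDerivAt_pow 2 t) (pow_ne_zero 2 ht0.ne')).congr_deriv ?_
    rw [div_eq_div_iff (by positivity) (by positivity)]
    push_cast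
    ring
  rw [hQt.deriv]
  have hmt := hmul t htr
  rw [hP t ht0.le] at hmt
  exact div_nonpos_of_nonpos_of_nonneg (by linarith) (by positivity)

lemma setIntegral_Ioi_indicator_Iio_const {c : ℝ} (hc : 0 ≤ c) (a : ℝ) :
    ∫ u in Ioi 0, (Iio c).indicator (fun _ => a) u = c * a := by
  rw [integral_indicator_const _ measurableSet_Iio, measureReal_restrict_apply measurableSet_Iio,
    Iio_inter_Ioi, Real.volume_real_Ioo_of_le hc, sub_zero, smul_eq_mul]

lemma integrableOn_Ioi_indicator_Iio_const (c a : ℝ) :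
    IntegrableOn ((Iio c).indicator fun _ => a) (Ioi 0) := by
  refine IntegrableOn.integrable_indicator ?_ measurableSet_Iio
  refine integrableOn_const ?_
  rw [Measure.restrict_apply measurableSet_Iio, Iio_inter_Ioi]
  exact measure_Ioo_lt_top.ne

theorem integral_mul_eq_integral_Ioi_setIntegral_lt {α : Type*} [MeasurableSpace α]
    {μ : Measure α} [SFinite μ] {φ G : α → ℝ} (hφ : AEStronglyMeasurable φ μ)
    (hG : AEMeasurable G μ) (hG0 : 0 ≤ᵐ[μ] G) (hφG : Integrable (fun x => φ x * G x) μ) :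
    ∫ x, φ x * G x ∂μ = ∫ u in Ioi 0, ∫ x in {x | u < G x}, φ x ∂μ := by
  set F : α → ℝ → ℝ := fun x => (Iio (G x)).indicator fun _ => φ x
  have hF : AEStronglyMeasurable (Function.uncurry F) (μ.prod (volume.restrict (Ioi 0))) :=
    hφ.comp_fst.indicator₀ (s := {p | p.2 < G p.1})
      (nullMeasurableSet_lt measurable_snd.aemeasurable hG.comp_fst)
  have hF_int : Integrable (Function.uncurry F) (μ.prod (volume.restrict (Ioi 0))) := by
    refine (integrable_prod_iff hF).2 ⟨.of_forall fun x => ?_, ?_⟩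
    · exact integrableOn_Ioi_indicator_Iio_const (G x) (φ x)
    · refine hφG.norm.congr ?_
      filter_upwards [hG0] with x hx
      simp only [Function.uncurry_apply_pair, F, norm_indicator_eq_indicator_norm,
        setIntegral_Ioi_indicator_Iio_const hx, norm_mul, Real.norm_of_nonneg hx, mul_comm]
  calc ∫ x, φ x * G x ∂μ = ∫ x, (∫ u in Ioi 0, F x u) ∂μ := by
        refine integral_congr_ae ?_
        filter_upwards [hG0] with x hx
        rw [setIntegral_Ioi_indicator_Iio_const hx, mul_comm]
    _ = ∫ u in Ioi 0, ∫ x, F x u ∂μ := integral_integral_swap hF_int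
    _ = ∫ u in Ioi 0, ∫ x in {x | u < G x}, φ x ∂μ := by
        congr 1 with u
        exact integral_indicator₀ (nullMeasurableSet_lt aemeasurable_const hG)

lemma setIntegral_nonneg_of_forall_Ioc_subset {φ : ℝ → ℝ} {r : ℝ} {S : Set ℝ}
    (hSr : S ⊆ Ioo 0 r) (hS : ∀ x ∈ S, Ioc 0 x ⊆ S)
    (hΦ : ∀ t ∈ Ioc 0 r, 0 ≤ ∫ s in Ioo 0 t, φ s) : 0 ≤ ∫ s in S, φ s := by
  rcases S.eq_empty_or_nonempty with rfl | ⟨x₀, hx₀⟩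
  · simp
  have hbdd : BddAbove S := ⟨r, fun x hx => (hSr hx).2.le⟩
  have hIoc : S ⊆ Ioc 0 (sSup S) := fun x hx => ⟨(hSr hx).1, le_csSup hbdd hx⟩
  have hIoo : Ioo 0 (sSup S) ⊆ S := fun y hy => by
    obtain ⟨x, hx, hyx⟩ := exists_lt_of_lt_csSup ⟨x₀, hx₀⟩ hy.2
    exact hS x hx ⟨hy.1, hyx.le⟩
  have hae : S =ᵐ[volume] Ioo 0 (sSup S) :=
    (hIoc.eventuallyLE.trans Ioo_ae_eq_Ioc.symm.le).antisymm hIoo.eventuallyLE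
  rw [setIntegral_congr_set hae]
  exact hΦ _ ⟨(hIoc hx₀).1.trans_le (hIoc hx₀).2, csSup_le ⟨x₀, hx₀⟩ fun x hx => (hSr hx).2.le⟩

theorem mul_setIntegral_le_setIntegral_mul_of_antitoneOn {φ g : ℝ → ℝ} {r : ℝ}
    (hg : AntitoneOn g (Ioc 0 r)) (hφ : IntegrableOn φ (Ioo 0 r))
    (hφg : IntegrableOn (fun s => φ s * g s) (Ioo 0 r))
    (hΦ : ∀ t ∈ Ioc 0 r, 0 ≤ ∫ s in Ioo 0 t, φ s) :
    g r * ∫ s in Ioo 0 r, φ s ≤ ∫ s in Ioo 0 r, φ s * g s := by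
  have hφG : IntegrableOn (fun s => φ s * (g s - g r)) (Ioo 0 r) := by
    simp_rw [mul_sub]
    exact hφg.sub (hφ.mul_const (g r))
  have hG0 : ∀ s ∈ Ioo 0 r, g r ≤ g s := fun s hs =>
    hg ⟨hs.1, hs.2.le⟩ ⟨hs.1.trans hs.2, le_rfl⟩ hs.2.le
  have hlayer := integral_mul_eq_integral_Ioi_setIntegral_lt hφ.aestronglyMeasurable
    ((aemeasurable_restrict_of_antitoneOn measurableSet_Ioo
      (hg.mono Ioo_subset_Ioc_self)).sub_const (g r))
    ((ae_restrict_mem measurableSet_Ioo).mono fun s hs => sub_nonneg.2 (hG0 s hs)) hφG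
  have hsuper : ∀ u ∈ Ioi (0 : ℝ),
      0 ≤ ∫ x in {x | u < g x - g r}, φ x ∂(volume.restrict (Ioo 0 r)) := by
    intro u _
    rw [Measure.restrict_restrict' measurableSet_Ioo]
    refine setIntegral_nonneg_of_forall_Ioc_subset inter_subset_right
      (fun x hx y hy => ⟨?_, hy.1, hy.2.trans_lt hx.2.2⟩) hΦ
    have hgxy : g x ≤ g y := hg ⟨hy.1, hy.2.trans hx.2.2.le⟩ ⟨hx.2.1, hx.2.2.le⟩ hy.2
    exact hx.1.trans_le (sub_le_sub_right hgxy _)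
  calc g r * ∫ s in Ioo 0 r, φ s
      ≤ (g r * ∫ s in Ioo 0 r, φ s) + ∫ s in Ioo 0 r, φ s * (g s - g r) := by
        rw [hlayer]
        exact le_add_of_nonneg_right (setIntegral_nonneg measurableSet_Ioi hsuper)
    _ = ∫ s in Ioo 0 r, φ s * g s := by
        rw [← integral_const_mul, ← integral_add (hφ.const_mul _) hφG]
        congr 1 with s
        ring

theorem two_mul_setIntegral_div_sq_mul_le_setIntegral_mul {h g : ℝ → ℝ} {r : ℝ} (hr : 0 < r)
    (hg : AntitoneOn g (Ioc 0 r)) (hh : IntegrableOn h (Ioo 0 r))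
    (hhg : IntegrableOn (fun s => h s * g s) (Ioo 0 r))
    (hsg : IntegrableOn (fun s => s * g s) (Ioo 0 r))
    (hH : AntitoneOn (fun t => (∫ s in Ioo 0 t, h s) / t ^ 2) (Ioc 0 r)) :
    2 * (∫ s in Ioo 0 r, h s) / r ^ 2 * ∫ s in Ioo 0 r, s * g s ≤
      ∫ s in Ioo 0 r, h s * g s := by
  set c := 2 * (∫ s in Ioo 0 r, h s) / r ^ 2 with hc
  have hid : ∀ t, IntegrableOn (fun s : ℝ => s) (Ioo 0 t) := fun t =>
    continuous_id.integrableOn_Icc.mono_set Ioo_subset_Icc_self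
  have hΦ : ∀ t ∈ Ioc 0 r,
      ∫ s in Ioo 0 t, (h s - c * s) = (∫ s in Ioo 0 t, h s) - c * (t ^ 2 / 2) := fun t ht => by
    rw [integral_sub (hh.mono_set (Ioo_subset_Ioo_right ht.2)) ((hid t).const_mul c),
      integral_const_mul, ← integral_Ioc_eq_integral_Ioo (f := fun s => s),
      ← intervalIntegral.integral_of_le ht.1.le, integral_id]
    ring
  have hφg : IntegrableOn (fun s => (h s - c * s) * g s) (Ioo 0 r) := by
    simp_rw [sub_mul, mul_assoc]
    exact hhg.sub (hsg.const_mul c)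
  have key := mul_setIntegral_le_setIntegral_mul_of_antitoneOn (φ := fun s => h s - c * s) hg
    (hh.sub ((hid r).const_mul c)) hφg fun t ht => by
      rw [hΦ t ht, sub_nonneg]
      calc c * (t ^ 2 / 2) = (∫ s in Ioo 0 r, h s) / r ^ 2 * t ^ 2 := by rw [hc]; ring
        _ ≤ ∫ s in Ioo 0 t, h s := (le_div_iff₀ (pow_pos ht.1 2)).1 (hH ht ⟨hr, le_rfl⟩ ht.2)
  have hΦr : (∫ s in Ioo 0 r, h s) - c * (r ^ 2 / 2) = 0 := by
    rw [hc]; field_simp; ring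
  have hsplit : ∫ s in Ioo 0 r, (h s - c * s) * g s =
      (∫ s in Ioo 0 r, h s * g s) - c * ∫ s in Ioo 0 r, s * g s := by
    simp_rw [sub_mul, mul_assoc]
    rw [integral_sub hhg (hsg.const_mul c), integral_const_mul]
  rw [hΦ r ⟨hr, le_rfl⟩, hΦr, mul_zero, hsplit, sub_nonneg] at key
  exact key

theorem stmt_14_general (r : ℝ) (hr : 0 < r) (g h : ℝ → ℝ)
    (hg_mono : ∀ s t : ℝ, 0 < s → s ≤ t → t ≤ r → g t ≤ g s)
    (hg_int : IntegrableOn (fun s => s * g s) (Ioo 0 r))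
    (hg_nonneg : 0 ≤ ∫ s in Ioo (0:ℝ) r, s * g s)
    (hh_nonneg : ∀ s : ℝ, 0 ≤ s → s ≤ r → 0 ≤ h s)
    (hh_int : IntegrableOn h (Ioo 0 r))
    (hhg_int : IntegrableOn (fun s => h s * |g s|) (Ioo 0 r))
    (hh_subadd : ∀ s₁ s₂ : ℝ, 0 < s₁ → 0 < s₂ → s₁ + s₂ < r →
      h (s₁ + s₂) ≤ h s₁ + h s₂) :
    0 ≤ ∫ s in Ioo (0:ℝ) r, h s * g s := by
  have hg : AntitoneOn g (Ioc 0 r) := fun s hs t ht hst => hg_mono s t hs.1 hst ht.2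
  have hhg : IntegrableOn (fun s => h s * g s) (Ioo 0 r) :=
    Integrable.mono hhg_int (hh_int.aestronglyMeasurable.mul (aemeasurable_restrict_of_antitoneOn
      measurableSet_Ioo (hg.mono Ioo_subset_Ioc_self)).aestronglyMeasurable)
      (.of_forall fun s => by simp)
  have hH := antitoneOn_setIntegral_div_sq hh_int fun t ht =>
    mul_le_two_mul_setIntegral_of_le_add_sub ht.1.le
      (hh_int.mono_set (Ioo_subset_Ioo_right ht.2.le))
      fun s hs => by simpa using hh_subadd s (t - s) hs.1 (sub_pos.2 hs.2) (by linarith [ht.2])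
  have hHr : 0 ≤ ∫ s in Ioo 0 r, h s :=
    setIntegral_nonneg measurableSet_Ioo fun s hs => hh_nonneg s hs.1.le hs.2.le
  exact (mul_nonneg (by positivity) hg_nonneg).trans
    (two_mul_setIntegral_div_sq_mul_le_setIntegral_mul hr hg hh_int hhg hg_int hH)

/-- Let `r > 0`, let `g : (0,r] → ℝ` be continuous and
non-increasing with `s ↦ s g(s)` integrable on `(0,r)` and `∫₀^r s g(s) ds ≥ 0`,
and let `h : [0,r] → [0,∞)` be measurable with `h(0) = 0`, with `h` and `h·|g|`
integrable on `(0,r)`, and subadditive: `h(s₁+s₂) ≤ h(s₁) + h(s₂)` for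
`s₁, s₂ > 0` with `s₁ + s₂ < r`.  Then `∫₀^r h(s) g(s) ds ≥ 0`. -/
theorem stmt_14 (r : ℝ) (hr : 0 < r) (g h : ℝ → ℝ)
    (hg_cont : ContinuousOn g (Ioc 0 r))
    (hg_mono : ∀ s t : ℝ, 0 < s → s ≤ t → t ≤ r → g t ≤ g s)
    (hg_int : IntegrableOn (fun s => s * g s) (Ioo 0 r))
    (hg_nonneg : 0 ≤ ∫ s in Ioo (0:ℝ) r, s * g s)
    (hh_meas : Measurable h)
    (hh0 : h 0 = 0)
    (hh_nonneg : ∀ s : ℝ, 0 ≤ s → s ≤ r → 0 ≤ h s)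
    (hh_int : IntegrableOn h (Ioo 0 r))
    (hhg_int : IntegrableOn (fun s => h s * |g s|) (Ioo 0 r))
    (hh_subadd : ∀ s₁ s₂ : ℝ, 0 < s₁ → 0 < s₂ → s₁ + s₂ < r →
      h (s₁ + s₂) ≤ h s₁ + h s₂) :
    0 ≤ ∫ s in Ioo (0:ℝ) r, h s * g s :=
  stmt_14_general r hr g h hg_mono hg_int hg_nonneg hh_nonneg hh_int hhg_int hh_subadd
end

section
/- Let r>0 and let h:[0,r)→[0,∞) be measurable, integrable on (0,s) for every s<r, and subadditive in the sense that h(s₁)+h(s₂) ≥ h(s₁+s₂) for all s₁,s₂>0 with s₁+s₂<r. Then for every s∈(0,r), h(s) ≤ (2/s)·∫₀^s h(t) dt; consequently, the function H(s) := s⁻²·∫₀^s h(t) dt is non-increasing on (0,r). -/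
open MeasureTheory Set

/-!
Integrating `h s ≤ h t + h (s - t)` over `t ∈ (0, s)` and using the reflection `t ↦ s - t` gives
`s h(s) ≤ 2 F(s)` with `F(s) = ∫₀^s h`. This is the differential inequality `F' ≤ 2F/s`, i.e.
`(F/s²)' ≤ 0`; to avoid differentiating `F`, take a maximum point `c` of `G = F/s²` on `[s₁, s₂]`:
on `(s₁, c]` we get `h(t) ≤ 2t G(c)`, so `F(c) - F(s₁) ≤ G(c)(c² - s₁²)`, which with `F(c) = c² G(c)`
yields `G(c) ≤ G(s₁)`.
-/

lemma mul_le_two_mul_integral_of_subadditive {h : ℝ → ℝ} {s : ℝ} (hs : 0 ≤ s)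
    (hint : IntervalIntegrable h volume 0 s)
    (hsub : ∀ t ∈ Ioo 0 s, h s ≤ h t + h (s - t)) :
    s * h s ≤ 2 * ∫ t in 0..s, h t := by
  have hrefl : IntervalIntegrable (fun t => h (s - t)) volume 0 s := by
    simpa using (hint.comp_sub_left s).symm
  have hrefl_eq : ∫ t in 0..s, h (s - t) = ∫ t in 0..s, h t := by
    simp [intervalIntegral.integral_comp_sub_left]
  calc s * h s = ∫ _ in 0..s, h s := by simp
    _ ≤ ∫ t in 0..s, (h t + h (s - t)) :=
      intervalIntegral.integral_mono_on_of_le_Ioo hs intervalIntegrable_const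
        (hint.add hrefl) hsub
    _ = 2 * ∫ t in 0..s, h t := by
      rw [intervalIntegral.integral_add hint hrefl, hrefl_eq]; ring

lemma integral_le_mul_pow_sub_pow_of_le {h : ℝ → ℝ} {a b M : ℝ} (n : ℕ) (hab : a ≤ b)
    (hint : IntervalIntegrable h volume a b)
    (hle : ∀ t ∈ Ioc a b, h t ≤ M * (n * t ^ (n - 1))) :
    ∫ t in a..b, h t ≤ M * (b ^ n - a ^ n) := by
  have hderiv : ∫ t in a..b, M * (n * t ^ (n - 1)) = M * (b ^ n - a ^ n) := by
    rw [intervalIntegral.integral_const_mul, intervalIntegral.integral_eq_sub_of_hasDerivAt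
      (fun t _ => hasDerivAt_pow n t) ((by fun_prop : Continuous _).intervalIntegrable _ _)]
  rw [← hderiv]
  exact intervalIntegral.integral_mono_on_of_le_Ioo hab hint
    ((by fun_prop : Continuous _).intervalIntegrable _ _)
    fun t ht => hle t (Ioo_subset_Ioc_self ht)

lemma antitoneOn_inv_pow_mul_integral {h : ℝ → ℝ} {b : ℝ} (n : ℕ)
    (hint : IntervalIntegrable h volume 0 b)
    (hbound : ∀ t ∈ Ioc 0 b, t * h t ≤ n * ∫ x in 0..t, h x) :
    AntitoneOn (fun s => s⁻¹ ^ n * ∫ t in 0..s, h t) (Ioc 0 b) := by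
  intro s₁ hs₁ s₂ hs₂ h12
  set F : ℝ → ℝ := fun s => ∫ t in 0..s, h t
  set G : ℝ → ℝ := fun s => s⁻¹ ^ n * F s
  have hb : 0 ≤ b := hs₁.1.le.trans hs₁.2
  have hF : ContinuousOn F (Icc 0 b) := by
    simpa [uIcc_of_le hb] using
      intervalIntegral.continuousOn_primitive_interval' hint left_mem_uIcc
  have hG : ContinuousOn G (Icc s₁ s₂) :=
    ((continuousOn_inv₀.mono fun x hx => (hs₁.1.trans_le hx.1).ne').pow n).mul
      (hF.mono (Icc_subset_Icc hs₁.1.le hs₂.2))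
  obtain ⟨c, hc, hmax⟩ := isCompact_Icc.exists_isMaxOn (nonempty_Icc.2 h12) hG
  have hc₀ : 0 < c := hs₁.1.trans_le hc.1
  have hcb : c ≤ b := hc.2.trans hs₂.2
  have hGF : ∀ t, 0 < t → F t = t ^ n * G t := fun t ht => by
    simp only [G, ← mul_assoc, ← mul_pow, mul_inv_cancel₀ ht.ne', one_pow, one_mul]
  have hle : ∀ t ∈ Ioc s₁ c, h t ≤ G c * (n * t ^ (n - 1)) := by
    intro t ht
    have ht₀ : 0 < t := hs₁.1.trans ht.1
    have hGt : G t ≤ G c := hmax ⟨ht.1.le, ht.2.trans hc.2⟩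
    have hpow : (n : ℝ) * t ^ n = t * (n * t ^ (n - 1)) := by
      cases n with
      | zero => simp
      | succ k => simp only [pow_succ, Nat.add_sub_cancel]; ring
    refine le_of_mul_le_mul_left ?_ ht₀
    calc t * h t ≤ n * F t := hbound t ⟨ht₀, ht.2.trans hcb⟩
      _ = n * t ^ n * G t := by rw [hGF t ht₀]; ring
      _ ≤ n * t ^ n * G c := by gcongr
      _ = t * (G c * (n * t ^ (n - 1))) := by rw [hpow]; ring
  have hint' : ∀ x y, 0 ≤ x → x ≤ y → y ≤ b → IntervalIntegrable h volume x y :=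
    fun x y hx hxy hy => hint.mono_set (by
      rw [uIcc_of_le hxy, uIcc_of_le hb]; exact Icc_subset_Icc hx hy)
  have hsplit : F c = F s₁ + ∫ t in s₁..c, h t :=
    (intervalIntegral.integral_add_adjacent_intervals (hint' 0 s₁ le_rfl hs₁.1.le hs₁.2)
      (hint' s₁ c hs₁.1.le hc.1 hcb)).symm
  have hmid := integral_le_mul_pow_sub_pow_of_le n hc.1 (hint' s₁ c hs₁.1.le hc.1 hcb) hle
  have hs₁F : G c * s₁ ^ n ≤ F s₁ := by
    rw [hGF c hc₀] at hsplit
    linarith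
  calc G s₂ ≤ G c := hmax ⟨h12, le_rfl⟩
    _ = s₁⁻¹ ^ n * (G c * s₁ ^ n) := by
      rw [mul_left_comm, ← mul_pow, inv_mul_cancel₀ hs₁.1.ne', one_pow, mul_one]
    _ ≤ s₁⁻¹ ^ n * F s₁ := by have := hs₁.1; gcongr

theorem stmt_15_general (r : ℝ) (h : ℝ → ℝ)
    (hh_int : ∀ s : ℝ, s < r → IntegrableOn h (Ioo 0 s))
    (hh_subadd : ∀ s₁ s₂ : ℝ, 0 < s₁ → 0 < s₂ → s₁ + s₂ < r →
      h (s₁ + s₂) ≤ h s₁ + h s₂) :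
    (∀ s : ℝ, 0 < s → s < r → h s ≤ (2 / s) * ∫ t in Ioo (0:ℝ) s, h t) ∧
    (∀ s₁ s₂ : ℝ, 0 < s₁ → s₁ ≤ s₂ → s₂ < r →
      s₂⁻¹ ^ 2 * (∫ t in Ioo (0:ℝ) s₂, h t) ≤ s₁⁻¹ ^ 2 * ∫ t in Ioo (0:ℝ) s₁, h t) := by
  have hIoo : ∀ s, 0 ≤ s → ∫ t in Ioo (0:ℝ) s, h t = ∫ t in 0..s, h t := fun s hs => by
    rw [intervalIntegral.integral_of_le hs, integral_Ioc_eq_integral_Ioo]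
  have hint : ∀ s, 0 ≤ s → s < r → IntervalIntegrable h volume 0 s := fun s hs hsr =>
    (intervalIntegrable_iff_integrableOn_Ioo_of_le hs).2 (hh_int s hsr)
  have hbound : ∀ s, 0 < s → s < r → s * h s ≤ 2 * ∫ t in 0..s, h t := fun s hs hsr =>
    mul_le_two_mul_integral_of_subadditive hs.le (hint s hs.le hsr) fun t ht => by
      simpa using hh_subadd t (s - t) ht.1 (sub_pos.2 ht.2) (by linarith)
  refine ⟨fun s hs hsr => ?_, fun s₁ s₂ hs₁ h12 hs₂r => ?_⟩
  · rw [hIoo s hs.le, div_mul_eq_mul_div, le_div_iff₀ hs, mul_comm]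
    exact hbound s hs hsr
  · have hs₂ : 0 < s₂ := hs₁.trans_le h12
    rw [hIoo s₁ hs₁.le, hIoo s₂ hs₂.le]
    exact antitoneOn_inv_pow_mul_integral 2 (hint s₂ hs₂.le hs₂r)
      (fun t ht => by exact_mod_cast hbound t ht.1 (ht.2.trans_lt hs₂r))
      ⟨hs₁, h12⟩ ⟨hs₂, le_rfl⟩ h12

/-- Let `r > 0` and `h : [0,r) → [0,∞)` be measurable,
integrable on `(0,s)` for every `s < r`, and subadditive
(`h(s₁+s₂) ≤ h(s₁) + h(s₂)` for `s₁, s₂ > 0` with `s₁+s₂ < r`).  Then for every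
`s ∈ (0,r)`, `h(s) ≤ (2/s) ∫₀^s h(t) dt`; consequently,
`H(s) := s⁻² ∫₀^s h(t) dt` is non-increasing on `(0,r)`. -/
theorem stmt_15 (r : ℝ) (hr : 0 < r) (h : ℝ → ℝ)
    (hh_meas : Measurable h)
    (hh_nonneg : ∀ s : ℝ, 0 ≤ s → s < r → 0 ≤ h s)
    (hh_int : ∀ s : ℝ, s < r → IntegrableOn h (Ioo 0 s))
    (hh_subadd : ∀ s₁ s₂ : ℝ, 0 < s₁ → 0 < s₂ → s₁ + s₂ < r →
      h (s₁ + s₂) ≤ h s₁ + h s₂) :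
    (∀ s : ℝ, 0 < s → s < r → h s ≤ (2 / s) * ∫ t in Ioo (0:ℝ) s, h t) ∧
    (∀ s₁ s₂ : ℝ, 0 < s₁ → s₁ ≤ s₂ → s₂ < r →
      s₂⁻¹ ^ 2 * (∫ t in Ioo (0:ℝ) s₂, h t) ≤ s₁⁻¹ ^ 2 * ∫ t in Ioo (0:ℝ) s₁, h t) :=
  stmt_15_general r h hh_int hh_subadd
end
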